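/- arXiv:1709.06183 — 8 statements merged into one kernel-verified Lean document; each statement's English description precedes it below -/
import Mathlib

section
/- Fix an integer r ≥ 2. There exists a function f : [0,1] → ℝ with f continuous on (0,1], f(0) = 0, 0 ≤ f(x) ≤ 1 for all x ∈ [0,1], and there exist constants c > 0 and N ∈ ℕ, such that for all n ≥ N the delete-1 r-jackknife bias satisfies sup_{p∈[0,1]} |Σ_{i=1}^r C_i B_{n−r+i}[f](p) − f(p)| ≥ c n^{r−1}, where C_i = ∏_{j≠i} (n−r+i)/(i − j) are the jackknife coefficients for the sample sizes n_i = n − r + i, i = 1, …, r. -/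
/-- Bernstein operator: `B_m[g](p) = Σ_{k=0}^m C(m,k) p^k (1-p)^{m-k} g(k/m)`. -/
noncomputable def bernstein' (m : ℕ) (g : ℝ → ℝ) (p : ℝ) : ℝ :=
  ∑ k ∈ Finset.range (m + 1), (m.choose k : ℝ) * p ^ k * (1 - p) ^ (m - k) * g ((k : ℝ) / m)

/-- `r`-th symmetric difference of `g` with step `h`, vanishing near the boundary of `[0,1]`. -/
noncomputable def ditzSymmDiff (r : ℕ) (h : ℝ) (g : ℝ → ℝ) (x : ℝ) : ℝ :=
  if x - r * h / 2 ∈ Set.Icc (0:ℝ) 1 ∧ x + r * h / 2 ∈ Set.Icc (0:ℝ) 1 then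
    ∑ k ∈ Finset.range (r + 1), (-1 : ℝ) ^ k * (r.choose k : ℝ) * g (x + r * h / 2 - k * h)
  else 0

/-- `r`-th Ditzian–Totik modulus of smoothness with weight `φ(x) = √(x(1-x))`. -/
noncomputable def dtMod (r : ℕ) (g : ℝ → ℝ) (t : ℝ) : ℝ :=
  sSup {y : ℝ | ∃ h x : ℝ, 0 < h ∧ h ≤ t ∧ x ∈ Set.Icc (0:ℝ) 1 ∧
    y = |ditzSymmDiff r (h * Real.sqrt (x * (1 - x))) g x|}

/-- Sup norm on `[0,1]`. -/
noncomputable def supAbsOn (g : ℝ → ℝ) : ℝ := sSup ((fun p => |g p|) '' Set.Icc (0:ℝ) 1)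

/-- Jackknife coefficients `C_i = ∏_{j≠i} n_i/(n_i - n_j)`. -/
noncomputable def jackCoeff {r : ℕ} (ns : Fin r → ℕ) (i : Fin r) : ℝ :=
  ∏ j ∈ Finset.univ.erase i, (ns i : ℝ) / ((ns i : ℝ) - (ns j : ℝ))

/-- Sup over `p ∈ [0,1]` of the `r`-jackknife bias `|Σ_i C_i B_{n_i}[f](p) - f(p)|`. -/
noncomputable def jackBias {r : ℕ} (ns : Fin r → ℕ) (f : ℝ → ℝ) : ℝ :=
  sSup ((fun p => |(∑ i, jackCoeff ns i * bernstein' (ns i) f p) - f p|) '' Set.Icc (0:ℝ) 1)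

open Real Finset

/-!
Take `f` continuous on `(0,1]` with `f (1/k) = 1` if `r ∣ k` and `f (1/k) = 0` otherwise. At
`p = δ/n` one has `B_m[f](p) = m p (1-p)^(m-1) f(1/m) + O((m p)^2)`, and exactly one of the `r`
consecutive sample sizes `n - r + 1, …, n` is divisible by `r`. The jackknife combination therefore
keeps a single first-order term, of size `|C_i| δ ≥ (n/2r)^(r-1) δ/4`, while the second-order
remainders add up to at most `2 r n^(r-1) δ^2` because `|C_i| ≤ n^(r-1)`. For a small fixed `δ`
the bias at `p = δ/n` is therefore of order `n^(r-1)`.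
-/

section Bernstein

variable {m : ℕ} {p : ℝ}

lemma bernstein_weight_nonneg (hp0 : 0 ≤ p) (hp1 : p ≤ 1) (k : ℕ) :
    0 ≤ (m.choose k : ℝ) * p ^ k * (1 - p) ^ (m - k) := by
  have : 0 ≤ 1 - p := by linarith
  positivity

lemma sum_bernstein_weight (m : ℕ) (p : ℝ) :
    ∑ k ∈ range (m + 1), (m.choose k : ℝ) * p ^ k * (1 - p) ^ (m - k) = 1 := by
  calc _ = (p + (1 - p)) ^ m := by rw [add_pow]; exact sum_congr rfl fun k _ => by ring
    _ = 1 := by simp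

lemma bernstein_weight_le_pow (hp0 : 0 ≤ p) (hp1 : p ≤ 1) (k : ℕ) :
    (m.choose k : ℝ) * p ^ k * (1 - p) ^ (m - k) ≤ (m * p) ^ k := by
  have hchoose : (m.choose k : ℝ) ≤ (m : ℝ) ^ k := by exact_mod_cast Nat.choose_le_pow m k
  have hq : (1 - p) ^ (m - k) ≤ 1 := pow_le_one₀ (by linarith) (by linarith)
  calc _ ≤ (m : ℝ) ^ k * p ^ k * 1 := by gcongr
    _ = (m * p) ^ k := by rw [mul_pow, mul_one]

lemma abs_bernstein'_le {g : ℝ → ℝ} {M : ℝ} (hg : ∀ x, |g x| ≤ M) (hp0 : 0 ≤ p) (hp1 : p ≤ 1) :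
    |bernstein' m g p| ≤ M := by
  calc |bernstein' m g p|
      ≤ ∑ k ∈ range (m + 1), (m.choose k : ℝ) * p ^ k * (1 - p) ^ (m - k) * M := by
        refine (abs_sum_le_sum_abs _ _).trans (sum_le_sum fun k _ => ?_)
        rw [abs_mul, abs_of_nonneg (bernstein_weight_nonneg hp0 hp1 k)]
        exact mul_le_mul_of_nonneg_left (hg _) (bernstein_weight_nonneg hp0 hp1 k)
    _ = M := by rw [← sum_mul, sum_bernstein_weight, one_mul]

lemma sum_Ico_two_pow_le {a : ℝ} (ha0 : 0 ≤ a) (ha : a ≤ 1 / 2) (N : ℕ) :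
    ∑ k ∈ Ico 2 N, a ^ k ≤ 2 * a ^ 2 := by
  refine (geom_sum_Ico_le_of_lt_one ha0 (by linarith)).trans ?_
  rw [div_le_iff₀ (by linarith)]
  nlinarith [mul_nonneg (sq_nonneg a) (by linarith : (0 : ℝ) ≤ 1 - 2 * a)]

lemma abs_bernstein'_sub_le {g : ℝ → ℝ} {M : ℝ} (hm : m ≠ 0) (hg0 : g 0 = 0)
    (hg : ∀ x, |g x| ≤ M) (hp0 : 0 ≤ p) (hmp : m * p ≤ 1 / 2) :
    |bernstein' m g p - m * p * (1 - p) ^ (m - 1) * g (m : ℝ)⁻¹| ≤ 2 * M * (m * p) ^ 2 := by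
  have hM : 0 ≤ M := (abs_nonneg _).trans (hg 0)
  have hmp0 : 0 ≤ (m : ℝ) * p := mul_nonneg (Nat.cast_nonneg m) hp0
  have hp1 : p ≤ 1 := by
    have : (1 : ℝ) ≤ m := by exact_mod_cast Nat.one_le_iff_ne_zero.mpr hm
    nlinarith
  have hsplit : bernstein' m g p = m * p * (1 - p) ^ (m - 1) * g (m : ℝ)⁻¹ +
      ∑ k ∈ Ico 2 (m + 1), (m.choose k : ℝ) * p ^ k * (1 - p) ^ (m - k) * g (k / m) := by
    rw [bernstein', ← sum_range_add_sum_Ico _ (by omega : 2 ≤ m + 1)]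
    simp [sum_range_succ, hg0]
  rw [hsplit, add_sub_cancel_left]
  calc _ ≤ ∑ k ∈ Ico 2 (m + 1), M * (m * p) ^ k := by
        refine (abs_sum_le_sum_abs _ _).trans (sum_le_sum fun k _ => ?_)
        rw [abs_mul, abs_of_nonneg (bernstein_weight_nonneg hp0 hp1 k), mul_comm M]
        exact mul_le_mul (bernstein_weight_le_pow hp0 hp1 k) (hg _) (abs_nonneg _)
          (pow_nonneg hmp0 k)
    _ ≤ M * (2 * (m * p) ^ 2) := by
        rw [← mul_sum]
        exact mul_le_mul_of_nonneg_left (sum_Ico_two_pow_le hmp0 hmp _) hM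
    _ = 2 * M * (m * p) ^ 2 := by ring

end Bernstein

section JackknifeCoefficients

variable {r : ℕ} {ns : Fin r → ℕ}

lemma abs_jackCoeff (i : Fin r) :
    |jackCoeff ns i| = ∏ j ∈ univ.erase i, (ns i : ℝ) / |(ns i : ℝ) - ns j| := by
  rw [jackCoeff, abs_prod]
  exact prod_congr rfl fun j _ => by rw [abs_div, Nat.abs_cast]

lemma one_le_abs_natCast_sub {a b : ℕ} (h : a ≠ b) : 1 ≤ |(a : ℝ) - b| := by
  have : (1 : ℤ) ≤ |(a : ℤ) - b| := Int.one_le_abs (sub_ne_zero.mpr (by exact_mod_cast h))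
  exact_mod_cast this

lemma abs_jackCoeff_le (hns : Function.Injective ns) (i : Fin r) :
    |jackCoeff ns i| ≤ (ns i : ℝ) ^ (r - 1) := by
  rw [abs_jackCoeff]
  calc ∏ j ∈ univ.erase i, (ns i : ℝ) / |(ns i : ℝ) - ns j|
      ≤ ∏ _j ∈ univ.erase i, (ns i : ℝ) :=
        prod_le_prod (fun j _ => by positivity) fun j hj => div_le_self (Nat.cast_nonneg _)
          (one_le_abs_natCast_sub (hns.ne (ne_of_mem_erase hj).symm))
    _ = (ns i : ℝ) ^ (r - 1) := by simp

lemma le_abs_jackCoeff (hns : Function.Injective ns) {D : ℝ} {i : Fin r}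
    (hD : ∀ j, |(ns i : ℝ) - ns j| ≤ D) : ((ns i : ℝ) / D) ^ (r - 1) ≤ |jackCoeff ns i| := by
  rw [abs_jackCoeff]
  calc ((ns i : ℝ) / D) ^ (r - 1) = ∏ _j ∈ univ.erase i, (ns i : ℝ) / D := by
        rw [prod_const, card_erase_of_mem (mem_univ i), card_univ, Fintype.card_fin]
    _ ≤ ∏ j ∈ univ.erase i, (ns i : ℝ) / |(ns i : ℝ) - ns j| := by
        refine prod_le_prod (fun j hj => ?_) fun j hj => ?_
        all_goals have hij := one_le_abs_natCast_sub (hns.ne (ne_of_mem_erase hj).symm)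
        · exact div_nonneg (Nat.cast_nonneg _) (zero_le_one.trans (hij.trans (hD j)))
        · exact div_le_div_of_nonneg_left (Nat.cast_nonneg _) (one_pos.trans_le hij) (hD j)

end JackknifeCoefficients

lemma existsUnique_dvd_add_fin {r : ℕ} (hr : 0 < r) (m : ℕ) : ∃! i : Fin r, r ∣ m + i := by
  refine existsUnique_of_exists_of_unique ⟨⟨(r - m % r) % r, Nat.mod_lt _ hr⟩, ?_⟩
    fun i j hi hj => Fin.ext ?_
  · show r ∣ m + (r - m % r) % r
    rw [Nat.dvd_iff_mod_eq_zero, Nat.add_mod_mod, ← Nat.mod_add_mod,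
      Nat.add_sub_cancel' (Nat.mod_lt m hr).le, Nat.mod_self]
  · exact Nat.ModEq.eq_of_lt_of_lt (Nat.ModEq.add_left_cancel' m
      ((Nat.modEq_zero_iff_dvd.2 hi).trans (Nat.modEq_zero_iff_dvd.2 hj).symm)) i.isLt j.isLt

def deleteOneSizes (r n : ℕ) (i : Fin r) : ℕ := n - r + 1 + i

section DeleteOneSizes

variable {r n : ℕ}

lemma deleteOneSizes_injective : Function.Injective (deleteOneSizes r n) :=
  fun i j h => Fin.ext (by simpa [deleteOneSizes] using h)

lemma deleteOneSizes_ne_zero (i : Fin r) : deleteOneSizes r n i ≠ 0 := by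
  simp [deleteOneSizes]

lemma deleteOneSizes_le (hrn : r ≤ n) (i : Fin r) : deleteOneSizes r n i ≤ n := by
  have := i.isLt
  simp only [deleteOneSizes]
  omega

lemma half_le_deleteOneSizes (hrn : 2 * r ≤ n) (i : Fin r) :
    (n : ℝ) / 2 ≤ deleteOneSizes r n i := by
  have : n ≤ 2 * deleteOneSizes r n i := by simp only [deleteOneSizes]; omega
  rw [div_le_iff₀ two_pos]
  exact_mod_cast (by omega : n ≤ deleteOneSizes r n i * 2)

lemma abs_deleteOneSizes_sub_le (i j : Fin r) :
    |(deleteOneSizes r n i : ℝ) - deleteOneSizes r n j| ≤ r := by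
  have hi : (i : ℝ) < r := by exact_mod_cast i.isLt
  have hj : (j : ℝ) < r := by exact_mod_cast j.isLt
  rw [abs_le]
  constructor <;> push_cast [deleteOneSizes] <;> linarith [(i : ℕ).cast_nonneg (α := ℝ), (j : ℕ).cast_nonneg (α := ℝ)]

lemma abs_jackCoeff_deleteOneSizes_le (hrn : r ≤ n) (i : Fin r) :
    |jackCoeff (deleteOneSizes r n) i| ≤ (n : ℝ) ^ (r - 1) :=
  (abs_jackCoeff_le deleteOneSizes_injective i).trans
    (pow_le_pow_left₀ (Nat.cast_nonneg _) (by exact_mod_cast deleteOneSizes_le hrn i) _)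

lemma le_abs_jackCoeff_deleteOneSizes (hrn : 2 * r ≤ n) (i : Fin r) :
    ((n : ℝ) / (2 * r)) ^ (r - 1) ≤ |jackCoeff (deleteOneSizes r n) i| :=
  calc ((n : ℝ) / (2 * r)) ^ (r - 1) = ((n : ℝ) / 2 / r) ^ (r - 1) := by rw [div_div]
    _ ≤ ((deleteOneSizes r n i : ℝ) / r) ^ (r - 1) := by
        gcongr
        exact half_le_deleteOneSizes hrn i
    _ ≤ |jackCoeff (deleteOneSizes r n) i| :=
        le_abs_jackCoeff deleteOneSizes_injective (abs_deleteOneSizes_sub_le i)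

end DeleteOneSizes

section Detector

variable {r : ℕ}

lemma cos_two_pi_div_lt_one (hr : 2 ≤ r) : cos (2 * π / r) < 1 := by
  have hr0 : (0 : ℝ) < r := by exact_mod_cast (by omega : 0 < r)
  have hr2 : (2 : ℝ) ≤ r := by exact_mod_cast hr
  have hpos : 0 < 2 * π / r := by positivity
  have hle : 2 * π / r ≤ π := by rw [div_le_iff₀ hr0]; nlinarith [pi_pos]
  simpa using strictAntiOn_cos ⟨le_rfl, pi_nonneg⟩ ⟨hpos.le, hle⟩ hpos

lemma cos_two_pi_mul_div_le_of_lt {k : ℕ} (hk0 : k ≠ 0) (hkr : k < r) :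
    cos (2 * π * k / r) ≤ cos (2 * π / r) := by
  have hr0 : (0 : ℝ) < r := by exact_mod_cast (by omega : 0 < r)
  have hk1 : (1 : ℝ) ≤ k := by exact_mod_cast Nat.one_le_iff_ne_zero.mpr hk0
  have hkr' : (k : ℝ) + 1 ≤ r := by exact_mod_cast hkr
  have hlow : 2 * π / r ≤ 2 * π * k / r :=
    div_le_div_of_nonneg_right (le_mul_of_one_le_right (by positivity) hk1) hr0.le
  have hhigh : 2 * π * k / r ≤ 2 * π - 2 * π / r := by
    rw [le_sub_iff_add_le, ← add_div, div_le_iff₀ hr0]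
    nlinarith [pi_pos]
  rcases le_total (2 * π * k / r) π with hπ | hπ
  · exact cos_le_cos_of_nonneg_of_le_pi (by positivity) hπ hlow
  · rw [← cos_two_pi_sub]
    exact cos_le_cos_of_nonneg_of_le_pi (by positivity) (by linarith) (by linarith)

lemma cos_two_pi_mul_div_le_of_not_dvd {k : ℕ} (hk : ¬ r ∣ k) :
    cos (2 * π * k / r) ≤ cos (2 * π / r) := by
  rcases Nat.eq_zero_or_pos r with rfl | hr
  · simp
  have hk_eq : 2 * π * k / r = 2 * π * (k % r : ℕ) / r + (k / r : ℕ) * (2 * π) := by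
    have : (k : ℝ) = (k % r : ℕ) + r * (k / r : ℕ) := by exact_mod_cast (Nat.mod_add_div k r).symm
    rw [this]
    field_simp
  rw [hk_eq, cos_add_nat_mul_two_pi]
  exact cos_two_pi_mul_div_le_of_lt (fun h => hk (Nat.dvd_of_mod_eq_zero h))
    (Nat.mod_lt k hr)

/-- Since `cos (2π k / r) = 1` when `r ∣ k` and `≤ cos (2π / r)` otherwise, the rescaled and
clipped cosine equals `1` at `x = 1/k` when `r ∣ k` and `0` otherwise. The value at `0` is set
by hand, as `2 * π / (r * 0) = 0` in Lean. -/
noncomputable def dvdDetector (r : ℕ) (x : ℝ) : ℝ :=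
  if x = 0 then 0 else
    max 0 ((cos (2 * π / (r * x)) - cos (2 * π / r)) / (1 - cos (2 * π / r)))

lemma dvdDetector_zero (r : ℕ) : dvdDetector r 0 = 0 := if_pos rfl

lemma dvdDetector_nonneg (r : ℕ) (x : ℝ) : 0 ≤ dvdDetector r x := by
  unfold dvdDetector
  split_ifs
  exacts [le_rfl, le_max_left _ _]

lemma dvdDetector_le_one (hr : 2 ≤ r) (x : ℝ) : dvdDetector r x ≤ 1 := by
  have hc := cos_two_pi_div_lt_one hr
  unfold dvdDetector
  split_ifs
  · exact zero_le_one
  · refine max_le zero_le_one ((div_le_one (by linarith)).2 ?_)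
    linarith [cos_le_one (2 * π / (r * x))]

lemma abs_dvdDetector_le_one (hr : 2 ≤ r) (x : ℝ) : |dvdDetector r x| ≤ 1 :=
  abs_le.2 ⟨by linarith [dvdDetector_nonneg r x], dvdDetector_le_one hr x⟩

lemma continuousOn_dvdDetector (hr : r ≠ 0) : ContinuousOn (dvdDetector r) (Set.Ioi 0) := by
  have hinv : ContinuousOn (fun x : ℝ => 2 * π / (r * x)) (Set.Ioi 0) :=
    continuousOn_const.div (by fun_prop) fun x hx =>
      mul_ne_zero (Nat.cast_ne_zero.mpr hr) (ne_of_gt hx)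
  refine ContinuousOn.congr ?_ fun x hx => if_neg (ne_of_gt hx)
  exact (continuous_const.max continuous_id).comp_continuousOn (((continuous_cos.comp_continuousOn hinv).sub
    continuousOn_const).div_const _)

lemma dvdDetector_inv_natCast (hr : 2 ≤ r) {k : ℕ} (hk : k ≠ 0) :
    dvdDetector r (k : ℝ)⁻¹ = if r ∣ k then 1 else 0 := by
  have hc := cos_two_pi_div_lt_one hr
  have hr0 : (r : ℝ) ≠ 0 := by exact_mod_cast (by omega : r ≠ 0)
  have hk0 : (k : ℝ) ≠ 0 := by exact_mod_cast hk
  have harg : 2 * π / (r * (k : ℝ)⁻¹) = 2 * π * k / r := by field_simp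
  rw [dvdDetector, if_neg (inv_ne_zero hk0), harg]
  split_ifs with hdvd
  · obtain ⟨q, rfl⟩ := hdvd
    have hq : 2 * π * ((r * q : ℕ) : ℝ) / r = q * (2 * π) := by push_cast; field_simp
    rw [hq, cos_nat_mul_two_pi, div_self (by linarith), max_eq_right zero_le_one]
  · refine max_eq_left (div_nonpos_of_nonpos_of_nonneg ?_ (by linarith))
    linarith [cos_two_pi_mul_div_le_of_not_dvd hdvd]

end Detector

lemma le_jackBias {r : ℕ} {ns : Fin r → ℕ} {f : ℝ → ℝ} {M : ℝ} (hf : ∀ x, |f x| ≤ M) {p : ℝ}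
    (hp : p ∈ Set.Icc (0 : ℝ) 1) :
    |(∑ i, jackCoeff ns i * bernstein' (ns i) f p) - f p| ≤ jackBias ns f := by
  refine le_csSup ⟨(∑ i, |jackCoeff ns i|) * M + M, ?_⟩ ⟨p, hp, rfl⟩
  rintro _ ⟨q, hq, rfl⟩
  refine (abs_sub _ _).trans (add_le_add ?_ (hf q))
  rw [sum_mul]
  refine (abs_sum_le_sum_abs _ _).trans (sum_le_sum fun i _ => ?_)
  rw [abs_mul]
  exact mul_le_mul_of_nonneg_left (abs_bernstein'_le hf hq.1 hq.2) (abs_nonneg _)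

lemma sum_jackCoeff_mul_bernstein'_eq_of_single {r : ℕ} {ns : Fin r → ℕ} {f : ℝ → ℝ} {i₀ : Fin r}
    (hf : ∀ i, f (ns i : ℝ)⁻¹ = if i = i₀ then 1 else 0) (p : ℝ) :
    ∑ i, jackCoeff ns i * bernstein' (ns i) f p =
      jackCoeff ns i₀ * (ns i₀ * p * (1 - p) ^ (ns i₀ - 1)) + ∑ i, jackCoeff ns i *
        (bernstein' (ns i) f p - ns i * p * (1 - p) ^ (ns i - 1) * f (ns i : ℝ)⁻¹) := by
  simp only [mul_sub, sum_sub_distrib, hf, mul_ite, mul_one, mul_zero, sum_ite_eq', mem_univ,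
    if_true]
  ring

lemma abs_sum_jackCoeff_mul_bernstein'_sub_le {r : ℕ} {ns : Fin r → ℕ} {g : ℝ → ℝ}
    {M A δ p : ℝ} (hns : ∀ i, ns i ≠ 0) (hg0 : g 0 = 0) (hg : ∀ x, |g x| ≤ M)
    (hC : ∀ i, |jackCoeff ns i| ≤ A) (hp0 : 0 ≤ p) (hδ : δ ≤ 1 / 2) (hnsp : ∀ i, ns i * p ≤ δ) :
    |∑ i, jackCoeff ns i *
        (bernstein' (ns i) g p - ns i * p * (1 - p) ^ (ns i - 1) * g (ns i : ℝ)⁻¹)|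
      ≤ r * (A * (2 * M * δ ^ 2)) := by
  have hM : 0 ≤ M := (abs_nonneg _).trans (hg 0)
  refine (abs_sum_le_sum_abs _ _).trans ?_
  calc _ ≤ ∑ _i : Fin r, A * (2 * M * δ ^ 2) := sum_le_sum fun i _ => by
        have hnsp0 : 0 ≤ (ns i : ℝ) * p := mul_nonneg (Nat.cast_nonneg _) hp0
        rw [abs_mul]
        refine mul_le_mul (hC i) ?_ (abs_nonneg _) ((abs_nonneg _).trans (hC i))
        exact (abs_bernstein'_sub_le (hns i) hg0 hg hp0 ((hnsp i).trans hδ)).trans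
          (mul_le_mul_of_nonneg_left (pow_le_pow_left₀ hnsp0 (hnsp i) 2) (by positivity))
    _ = r * (A * (2 * M * δ ^ 2)) := by simp

lemma le_abs_jackCoeff_deleteOneSizes_mul {r n : ℕ} (hrn : 2 * r ≤ n) (i : Fin r) {δ : ℝ}
    (hδ0 : 0 ≤ δ) (hδ : δ ≤ 1 / 2) :
    ((n : ℝ) / (2 * r)) ^ (r - 1) * (δ / 4) ≤
      |jackCoeff (deleteOneSizes r n) i * (deleteOneSizes r n i * (δ / n) *
        (1 - δ / n) ^ (deleteOneSizes r n i - 1))| := by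
  set k := deleteOneSizes r n i
  have hr := i.pos
  have hn : (1 : ℝ) ≤ n := by exact_mod_cast (by omega : 1 ≤ n)
  have hp0 : 0 ≤ δ / n := by positivity
  have hp1 : δ / n ≤ 1 := (div_le_one (by linarith)).2 (by linarith)
  have hk : δ / 2 ≤ k * (δ / n) := by
    calc δ / 2 = (n / 2) * (δ / n) := by field_simp
      _ ≤ k * (δ / n) := by gcongr; exact half_le_deleteOneSizes hrn i
  have hpow : 1 / 2 ≤ (1 - δ / n) ^ (k - 1) := by
    calc 1 / 2 ≤ 1 + n * (-(δ / n)) := by field_simp; linarith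
      _ ≤ (1 + -(δ / n)) ^ n := one_add_mul_le_pow (by linarith) n
      _ ≤ (1 - δ / n) ^ (k - 1) := by
        rw [← sub_eq_add_neg]
        exact pow_le_pow_of_le_one (by linarith) (by linarith)
          (by have := deleteOneSizes_le (by omega) i (n := n); omega)
  have hlin : 0 ≤ (k : ℝ) * (δ / n) * (1 - δ / n) ^ (k - 1) :=
    mul_nonneg (by positivity) (pow_nonneg (by linarith) _)
  rw [abs_mul, abs_of_nonneg hlin]
  calc _ = ((n : ℝ) / (2 * r)) ^ (r - 1) * ((δ / 2) * (1 / 2)) := by ring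
    _ ≤ _ := mul_le_mul (le_abs_jackCoeff_deleteOneSizes hrn i)
      (mul_le_mul hk hpow (by norm_num) (by positivity)) (by positivity) (abs_nonneg _)

lemma jackBias_deleteOneSizes_ge {r n : ℕ} (hr : 0 < r) (hrn : 2 * r ≤ n) {f : ℝ → ℝ}
    (hf : ∀ x, |f x| ≤ 1) (hf0 : f 0 = 0)
    (hf_inv : ∀ k : ℕ, k ≠ 0 → f (k : ℝ)⁻¹ = if r ∣ k then 1 else 0) :
    (n : ℝ) ^ (r - 1) / (128 * r * ((2 * r : ℝ) ^ (r - 1)) ^ 2) - 1 ≤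
      jackBias (deleteOneSizes r n) f := by
  set ns := deleteOneSizes r n
  set K : ℝ := (2 * r : ℝ) ^ (r - 1)
  -- with this `δ` the remainder `2 r n^(r-1) δ^2` is half the main term `(n/2r)^(r-1) δ/4`
  set δ : ℝ := 1 / (16 * r * K)
  set p : ℝ := δ / n
  have hrR : (1 : ℝ) ≤ r := by exact_mod_cast hr
  have hK : 1 ≤ K := one_le_pow₀ (by linarith)
  have hn : (1 : ℝ) ≤ n := by exact_mod_cast (by omega : 1 ≤ n)
  have hδ0 : 0 ≤ δ := by positivity
  have hδ : δ ≤ 1 / 2 := by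
    rw [div_le_div_iff₀ (by positivity) two_pos]
    nlinarith
  have hp0 : 0 ≤ p := by positivity
  have hp1 : p ≤ 1 := (div_le_one (by linarith)).2 (by linarith)
  have hnsp : ∀ i, (ns i : ℝ) * p ≤ δ := fun i =>
    calc (ns i : ℝ) * p ≤ n * p := mul_le_mul_of_nonneg_right
          (by exact_mod_cast deleteOneSizes_le (by omega) i) hp0
      _ = δ := mul_div_cancel₀ δ (by positivity)
  obtain ⟨i₀, hi₀, hi₀_unique⟩ := existsUnique_dvd_add_fin hr (n - r + 1)
  have hf_ns : ∀ i, f (ns i : ℝ)⁻¹ = if i = i₀ then 1 else 0 := fun i => by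
    rw [hf_inv _ (deleteOneSizes_ne_zero i)]
    exact if_congr ⟨hi₀_unique i, fun h => h ▸ hi₀⟩ rfl rfl
  set T := jackCoeff ns i₀ * (ns i₀ * p * (1 - p) ^ (ns i₀ - 1))
  set E := ∑ i, jackCoeff ns i *
    (bernstein' (ns i) f p - ns i * p * (1 - p) ^ (ns i - 1) * f (ns i : ℝ)⁻¹)
  have hsplit : ∑ i, jackCoeff ns i * bernstein' (ns i) f p = T + E :=
    sum_jackCoeff_mul_bernstein'_eq_of_single hf_ns p
  have hT := le_abs_jackCoeff_deleteOneSizes_mul hrn i₀ hδ0 hδ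
  have hE : |E| ≤ r * ((n : ℝ) ^ (r - 1) * (2 * 1 * δ ^ 2)) :=
    abs_sum_jackCoeff_mul_bernstein'_sub_le deleteOneSizes_ne_zero hf0 hf
      (abs_jackCoeff_deleteOneSizes_le (by omega)) hp0 hδ hnsp
  have hconst : ((n : ℝ) / (2 * r)) ^ (r - 1) * (δ / 4) - r * ((n : ℝ) ^ (r - 1) * (2 * 1 * δ ^ 2))
      = (n : ℝ) ^ (r - 1) / (128 * r * K ^ 2) := by
    rw [div_pow, show ((2 : ℝ) * r) ^ (r - 1) = K from rfl]
    simp only [δ]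
    field_simp
    ring
  have htri : |T| ≤ |T + E - f p| + |E| + |f p| := by
    have := abs_add_three (T + E - f p) (-E) (f p)
    rwa [abs_neg, show T + E - f p + -E + f p = T by ring] at this
  refine le_trans ?_ (le_jackBias hf ⟨hp0, hp1⟩)
  rw [hsplit]
  linarith [hf p]

/-- there is a fixed `f` continuous on `(0,1]`, `f(0)=0`, `0 ≤ f ≤ 1`, whose
delete-1 `r`-jackknife bias is `≳ n^{r-1}`. -/
theorem delete_one_jackknife_bad_bias (r : ℕ) (hr : 2 ≤ r) :
    ∃ f : ℝ → ℝ, ContinuousOn f (Set.Ioc 0 1) ∧ f 0 = 0 ∧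
      (∀ x ∈ Set.Icc (0:ℝ) 1, 0 ≤ f x ∧ f x ≤ 1) ∧
      ∃ c > 0, ∃ N : ℕ, ∀ n ≥ N,
        c * (n : ℝ) ^ (r - 1) ≤ jackBias (fun i : Fin r => n - r + 1 + i.val) f := by
  set A : ℝ := 256 * r * ((2 * r : ℝ) ^ (r - 1)) ^ 2
  have hr0 : (0 : ℝ) < r := by exact_mod_cast (by omega : 0 < r)
  have hA : 0 < A := by positivity
  refine ⟨dvdDetector r, (continuousOn_dvdDetector (by omega)).mono fun x hx => hx.1,
    dvdDetector_zero r, fun x _ => ⟨dvdDetector_nonneg r x, dvdDetector_le_one hr x⟩,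
    1 / A, one_div_pos.2 hA, 2 * r + ⌈A⌉₊, fun n hn => ?_⟩
  have hbias := jackBias_deleteOneSizes_ge (by omega) (by omega : 2 * r ≤ n)
    (abs_dvdDetector_le_one hr) (dvdDetector_zero r) fun k hk => dvdDetector_inv_natCast hr hk
  have hlarge : 1 ≤ (n : ℝ) ^ (r - 1) / A := by
    rw [one_le_div hA]
    calc A ≤ n := (Nat.le_ceil A).trans (by exact_mod_cast (by omega : ⌈A⌉₊ ≤ n))
      _ ≤ (n : ℝ) ^ (r - 1) := le_self_pow₀ (by exact_mod_cast (by omega : 1 ≤ n)) (by omega)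
  have hhalf : (n : ℝ) ^ (r - 1) / (128 * r * ((2 * r : ℝ) ^ (r - 1)) ^ 2)
      = 2 * ((n : ℝ) ^ (r - 1) / A) := by
    simp only [A]
    field_simp
    ring
  calc 1 / A * (n : ℝ) ^ (r - 1) = (n : ℝ) ^ (r - 1) / A := one_div_mul_eq_div _ _
    _ ≤ _ := by linarith
    _ ≤ _ := hbias
end

section
/- For every integer n ≥ 4, there exists a continuous function f : [0,1] → ℝ with sup_{x∈[0,1]} |f(x)| ≤ 1 (depending on n) such that the delete-1 2-jackknife estimator f̂_2, defined on X ∈ {0,1,…,n} by f̂_2(X) = n f(X/n) − ((n−1)/n) [ (n−X) f(X/(n−1)) + X f((X−1)/(n−1)) ] (where the term X f((X−1)/(n−1)) is 0 when X = 0), satisfies sup_{p∈[0,1]} Var_{X∼Binomial(n,p)}( f̂_2(X) ) ≥ n²/e. -/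
/-- Expectation `E[g(X)]` for `X ∼ Binomial(n,p)`. -/
noncomputable def binomExp (n : ℕ) (p : ℝ) (g : ℕ → ℝ) : ℝ :=
  ∑ k ∈ Finset.range (n + 1), (n.choose k : ℝ) * p ^ k * (1 - p) ^ (n - k) * g k

/-- Variance `Var(g(X))` for `X ∼ Binomial(n,p)`. -/
noncomputable def binomVar (n : ℕ) (p : ℝ) (g : ℕ → ℝ) : ℝ :=
  binomExp n p (fun k => (g k) ^ 2) - (binomExp n p g) ^ 2

/-- The delete-1 2-jackknife estimator built from `X ∼ Binomial(n,p)`: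
`f̂₂(X) = n f(X/n) − ((n−1)/n)[(n−X) f(X/(n−1)) + X f((X−1)/(n−1))]`. -/
noncomputable def jack2Est (n : ℕ) (f : ℝ → ℝ) (X : ℕ) : ℝ :=
  (n : ℝ) * f ((X : ℝ) / n) -
    (((n : ℝ) - 1) / n) *
      (((n : ℝ) - X) * f ((X : ℝ) / ((n : ℝ) - 1)) +
        (X : ℝ) * f (((X : ℝ) - 1) / ((n : ℝ) - 1)))

/-!
Place tents of half-width `1 / (2 n²)` and sign `(-1)^k` at the interior nodes `k / n`. They are
disjoint, and they vanish on the grid `ℤ / (n - 1)` where the jackknife evaluates `f` a second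
time, so `f̂₂(X) = n f(X / n)`, which is `n (-1)^X` for `0 < X < n` and `0` for `X ∈ {0, n}`.
At `p = 1/2` its variance is `n² (1 - 2^(1-n) - 4^(-n) (1 + (-1)^n)²) ≥ n² / 2 ≥ n² / e`.
-/

open Finset

section BinomialMoments

variable {n : ℕ} {p : ℝ}

lemma binomExp_congr {g g' : ℕ → ℝ} (h : ∀ k ≤ n, g k = g' k) :
    binomExp n p g = binomExp n p g' :=
  sum_congr rfl fun k hk => by rw [h k (Nat.lt_succ_iff.mp (mem_range.mp hk))]

lemma binomExp_sub (g g' : ℕ → ℝ) :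
    binomExp n p (fun k => g k - g' k) = binomExp n p g - binomExp n p g' := by
  simp only [binomExp, mul_sub, sum_sub_distrib]

lemma binomExp_const_mul (c : ℝ) (g : ℕ → ℝ) :
    binomExp n p (fun k => c * g k) = c * binomExp n p g := by
  simp only [binomExp, mul_sum]
  exact sum_congr rfl fun _ _ => by ring

lemma binomExp_pow (x : ℝ) : binomExp n p (fun k => x ^ k) = (x * p + (1 - p)) ^ n := by
  rw [add_pow]
  exact sum_congr rfl fun _ _ => by ring

lemma binomExp_const (c : ℝ) : binomExp n p (fun _ => c) = c := by
  have h := binomExp_pow (n := n) (p := p) 1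
  simp only [one_pow, one_mul, add_sub_cancel] at h
  simpa [h] using binomExp_const_mul (n := n) (p := p) c (fun _ => 1)

lemma binomExp_neg_one_pow : binomExp n p (fun k => (-1) ^ k) = (1 - 2 * p) ^ n := by
  rw [binomExp_pow]
  ring

lemma binomExp_ite_eq {j : ℕ} (hj : j ≤ n) (c : ℝ) :
    binomExp n p (fun k => if k = j then c else 0) =
      n.choose j * p ^ j * (1 - p) ^ (n - j) * c := by
  simp only [binomExp, mul_ite, mul_zero]
  rw [sum_ite_eq' _ j, if_pos (mem_range.mpr (Nat.lt_succ_of_le hj))]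

lemma binomVar_const_mul (c : ℝ) (g : ℕ → ℝ) :
    binomVar n p (fun k => c * g k) = c ^ 2 * binomVar n p g := by
  simp only [binomVar, mul_pow, binomExp_const_mul]
  ring

lemma continuous_binomVar (n : ℕ) (g : ℕ → ℝ) : Continuous fun p => binomVar n p g := by
  unfold binomVar binomExp
  fun_prop

lemma binomVar_of_interior_eq_neg_one_pow {g : ℕ → ℝ} (hn : n ≠ 0) (h0 : g 0 = 0)
    (hn' : g n = 0) (hg : ∀ k, 0 < k → k < n → g k = (-1) ^ k) :
    binomVar n p g =
      (1 - (1 - p) ^ n - p ^ n) - ((1 - 2 * p) ^ n - (1 - p) ^ n - (-1) ^ n * p ^ n) ^ 2 := by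
  have hsq : ∀ k ≤ n, g k ^ 2 = 1 - (if k = 0 then 1 else 0) - (if k = n then 1 else 0) := by
    intro k hk
    rcases Nat.eq_zero_or_pos k with rfl | hk0
    · simp [h0, Ne.symm hn]
    rcases hk.lt_or_eq with hkn | rfl
    · simp [hg k hk0 hkn, hk0.ne', hkn.ne, ← pow_mul, pow_mul']
    · simp [hn', hn]
  have hg' : ∀ k ≤ n,
      g k = (-1) ^ k - (if k = 0 then 1 else 0) - (if k = n then (-1) ^ n else 0) := by
    intro k hk
    rcases Nat.eq_zero_or_pos k with rfl | hk0
    · simp [h0, Ne.symm hn]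
    rcases hk.lt_or_eq with hkn | rfl
    · simp [hg k hk0 hkn, hk0.ne', hkn.ne]
    · simp [hn', hn]
  rw [binomVar, binomExp_congr hsq, binomExp_congr hg', binomExp_sub, binomExp_sub, binomExp_sub,
    binomExp_sub, binomExp_const, binomExp_neg_one_pow, binomExp_ite_eq (Nat.zero_le n),
    binomExp_ite_eq le_rfl, binomExp_ite_eq le_rfl]
  simp only [Nat.choose_zero_right, Nat.choose_self, Nat.cast_one, pow_zero, one_mul, mul_one,
    tsub_zero, tsub_self]
  ring

end BinomialMoments

noncomputable def tent (c r x : ℝ) : ℝ := max 0 (1 - |x - c| / r)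

section Tents

variable {c r x : ℝ}

lemma tent_self (c r : ℝ) : tent c r c = 1 := by
  simp [tent]

lemma tent_eq_zero_of_le (hr : 0 < r) (h : r ≤ |x - c|) : tent c r x = 0 :=
  max_eq_left (by rw [sub_nonpos, le_div_iff₀ hr]; linarith)

lemma abs_tent_le_one (hr : 0 ≤ r) : |tent c r x| ≤ 1 := by
  rw [tent, abs_of_nonneg (le_max_left _ _)]
  exact max_le zero_le_one (sub_le_self _ (by positivity))

lemma continuous_tent (c r : ℝ) : Continuous (tent c r) := by
  unfold tent
  fun_prop

variable {ι : Type*} {s : Finset ι} {a : ι → ℝ} {cs : ι → ℝ}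

lemma sum_tent_eq_zero (hr : 0 < r) (h : ∀ i ∈ s, r ≤ |x - cs i|) :
    ∑ i ∈ s, a i * tent (cs i) r x = 0 :=
  sum_eq_zero fun i hi => by rw [tent_eq_zero_of_le hr (h i hi), mul_zero]

lemma sum_tent_apply_center (hr : 0 < r) (hsep : ∀ i ∈ s, ∀ j ∈ s, i ≠ j → r ≤ |cs i - cs j|)
    {i : ι} (hi : i ∈ s) : ∑ j ∈ s, a j * tent (cs j) r (cs i) = a i := by
  rw [sum_eq_single_of_mem i hi fun j hj hji => by
    rw [tent_eq_zero_of_le hr (hsep i hi j hj hji.symm), mul_zero], tent_self, mul_one]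

lemma abs_sum_tent_le_one (hr : 0 < r) (ha : ∀ i ∈ s, |a i| ≤ 1)
    (hsep : ∀ i ∈ s, ∀ j ∈ s, i ≠ j → 2 * r ≤ |cs i - cs j|) :
    |∑ i ∈ s, a i * tent (cs i) r x| ≤ 1 := by
  by_cases hnear : ∃ i ∈ s, |x - cs i| < r
  · obtain ⟨i, hi, hxi⟩ := hnear
    have hfar : ∀ j ∈ s, j ≠ i → r ≤ |x - cs j| := fun j hj hji => by
      have := hsep i hi j hj hji.symm
      have := abs_sub_le (cs i) x (cs j)
      rw [abs_sub_comm (cs i) x] at this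
      linarith
    rw [sum_eq_single_of_mem i hi fun j hj hji => by
      rw [tent_eq_zero_of_le hr (hfar j hj hji), mul_zero], abs_mul]
    exact mul_le_one₀ (ha i hi) (abs_nonneg _) (abs_tent_le_one hr.le)
  · push Not at hnear
    rw [sum_tent_eq_zero hr hnear, abs_zero]
    exact zero_le_one

end Tents

lemma one_div_mul_le_abs_div_sub_div {a b d e : ℤ} (hd : 0 < d) (he : 0 < e)
    (h : a * e ≠ b * d) :
    1 / ((d : ℝ) * e) ≤ |(a : ℝ) / d - b / e| := by
  have hde : (0 : ℝ) < d * e := by positivity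
  have hnum : (1 : ℝ) ≤ |(a : ℝ) * e - d * b| := by
    exact_mod_cast Int.one_le_abs (sub_ne_zero.mpr (mul_comm b d ▸ h))
  rw [div_sub_div _ _ (by positivity) (by positivity), abs_div, abs_of_pos hde]
  exact div_le_div_of_nonneg_right hnum hde.le

noncomputable def alternatingTents (n : ℕ) (x : ℝ) : ℝ :=
  ∑ k ∈ Ioo 0 n, (-1) ^ k * tent (k / n) (1 / (2 * n ^ 2)) x

section AlternatingTents

variable {n : ℕ}

lemma continuous_alternatingTents (n : ℕ) : Continuous (alternatingTents n) :=
  continuous_finsetSum _ fun _ _ => continuous_const.mul (continuous_tent _ _)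

lemma two_mul_le_abs_natCast_div_sub (hn : 0 < n) {k j : ℕ} (hkj : k ≠ j) :
    2 * (1 / (2 * (n : ℝ) ^ 2)) ≤ |(k : ℝ) / n - j / n| := by
  have hn' : (0 : ℤ) < n := by exact_mod_cast hn
  have := one_div_mul_le_abs_div_sub_div (a := k) (b := j) hn' hn'
    (by intro h; exact hkj (by exact_mod_cast mul_right_cancel₀ hn'.ne' h))
  push_cast at this
  convert this using 1
  field_simp

lemma abs_alternatingTents_le_one (x : ℝ) : |alternatingTents n x| ≤ 1 := by
  rcases Nat.eq_zero_or_pos n with rfl | hn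
  · simp [alternatingTents]
  refine abs_sum_tent_le_one (by positivity) (fun k _ => by simp) fun k _ j _ hkj => ?_
  exact two_mul_le_abs_natCast_div_sub hn hkj

lemma alternatingTents_natCast_div {k : ℕ} (hk : 0 < k) (hkn : k < n) :
    alternatingTents n (k / n) = (-1) ^ k := by
  have hn : 0 < n := hk.trans hkn
  refine sum_tent_apply_center (by positivity) (fun i _ j _ hij => ?_) (mem_Ioo.mpr ⟨hk, hkn⟩)
  have := two_mul_le_abs_natCast_div_sub hn hij
  have : 0 < 1 / (2 * (n : ℝ) ^ 2) := by positivity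
  linarith

lemma alternatingTents_intCast_div_eq_zero (hn : 2 ≤ n) (m : ℤ) :
    alternatingTents n (m / ((n : ℝ) - 1)) = 0 := by
  refine sum_tent_eq_zero (by positivity) fun k hk => ?_
  obtain ⟨hk0, hkn⟩ := mem_Ioo.mp hk
  have hk0' : (0 : ℤ) < k := by exact_mod_cast hk0
  have hkn' : (k : ℤ) < n := by exact_mod_cast hkn
  have hgrid : m * n ≠ k * (n - 1) := by
    intro h
    -- `m n = k (n - 1)` means `k = (k - m) n`, impossible for `0 < k < n`
    rcases le_or_gt (k - m) 0 with hkm | hkm <;> nlinarith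
  have := one_div_mul_le_abs_div_sub_div (a := m) (b := k) (by omega) (by omega) hgrid
  push_cast at this
  refine le_trans ?_ this
  have hn' : (2 : ℝ) ≤ n := by exact_mod_cast hn
  rw [div_le_div_iff₀ (by positivity) (by nlinarith)]
  nlinarith

end AlternatingTents

lemma jack2Est_of_forall_intCast_div_eq_zero {n : ℕ} {f : ℝ → ℝ}
    (hf : ∀ m : ℤ, f (m / ((n : ℝ) - 1)) = 0) (X : ℕ) :
    jack2Est n f X = n * f (X / n) := by
  have hX := hf X
  have hX' := hf (X - 1)
  push_cast at hX hX'
  simp [jack2Est, hX, hX']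

lemma half_le_binomVar_half {n : ℕ} (hn : 3 ≤ n) {g : ℕ → ℝ} (h0 : g 0 = 0) (hn' : g n = 0)
    (hg : ∀ k, 0 < k → k < n → g k = (-1) ^ k) : 1 / 2 ≤ binomVar n (1 / 2) g := by
  rw [binomVar_of_interior_eq_neg_one_pow (by omega) h0 hn' hg]
  have ht : (1 / 2 : ℝ) ^ n ≤ 1 / 8 := by
    calc (1 / 2 : ℝ) ^ n ≤ (1 / 2) ^ 3 := pow_le_pow_of_le_one (by norm_num) (by norm_num) hn
      _ = 1 / 8 := by norm_num
  have ht0 : (0 : ℝ) ≤ (1 / 2) ^ n := by positivity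
  rw [show 1 - 2 * (1 / 2 : ℝ) = 0 by norm_num, zero_pow (by omega), one_sub_div two_ne_zero]
  rcases neg_one_pow_eq_or ℝ n with hs | hs <;> rw [hs] <;> nlinarith

/-- for every `n ≥ 4` there is a continuous `f` with `‖f‖ ≤ 1` on `[0,1]`
whose delete-1 2-jackknife estimator has worst-case variance at least `n²/e`. -/
theorem delete_one_jackknife_bad_variance (n : ℕ) (hn : 4 ≤ n) :
    ∃ f : ℝ → ℝ, ContinuousOn f (Set.Icc 0 1) ∧ (∀ x ∈ Set.Icc (0:ℝ) 1, |f x| ≤ 1) ∧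
      (n : ℝ) ^ 2 / Real.exp 1 ≤
        sSup ((fun p => binomVar n p (jack2Est n f)) '' Set.Icc (0:ℝ) 1) := by
  set f := alternatingTents n
  have hgrid := alternatingTents_intCast_div_eq_zero (n := n) (by omega)
  have hn1 : (n : ℝ) - 1 ≠ 0 := by
    have : (4 : ℝ) ≤ n := by exact_mod_cast hn
    linarith
  have hjack : jack2Est n f = fun k : ℕ => (n : ℝ) * f (k / n) :=
    funext (jack2Est_of_forall_intCast_div_eq_zero hgrid)
  have hvar : 1 / 2 ≤ binomVar n (1 / 2) fun k => f (k / n) := by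
    refine half_le_binomVar_half (by omega) (by simpa using hgrid 0) ?_
      fun k hk hkn => alternatingTents_natCast_div hk hkn
    simpa [div_self hn1, div_self (show (n : ℝ) ≠ 0 by positivity)] using hgrid (n - 1)
  have hbdd := (isCompact_Icc (a := (0 : ℝ)) (b := 1)).bddAbove_image
    (continuous_binomVar n (jack2Est n f)).continuousOn
  have he : (2 : ℝ) ≤ Real.exp 1 := by linarith [Real.add_one_le_exp 1]
  refine ⟨f, (continuous_alternatingTents n).continuousOn,
    fun x _ => abs_alternatingTents_le_one x, ?_⟩
  calc (n : ℝ) ^ 2 / Real.exp 1 ≤ n ^ 2 * (1 / 2) := by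
        rw [div_le_iff₀ (by positivity)]; nlinarith
    _ ≤ binomVar n (1 / 2) (jack2Est n f) := by
        rw [hjack, binomVar_const_mul]; gcongr
    _ ≤ _ := le_csSup hbdd ⟨1 / 2, by norm_num, rfl⟩
end

section
/- Fix integers r ≥ 2 and s with 1 ≤ s ≤ 2r−3. There exist a constant c > 0 and N ∈ ℕ, depending only on r and s, such that for every n ≥ N there exists a function f ∈ C^s([0,1]) with sup_{x∈[0,1]} |f^{(i)}(x)| ≤ 1 for all 0 ≤ i ≤ s, such that the delete-1 r-jackknife bias satisfies sup_{p∈[0,1]} |Σ_{i=1}^r C_i B_{n−r+i}[f](p) − f(p)| ≥ c n^{r−1−s}, where C_i are the jackknife coefficients for the sample sizes n_i = n − r + i. -/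
open Real Finset

lemma abs_iteratedDerivWithin_Icc_const_mul_cos_le (i : ℕ) (a ω : ℝ) {u v x : ℝ} (huv : u < v)
    (hx : x ∈ Set.Icc u v) :
    |iteratedDerivWithin i (fun x => a * cos (ω * x)) (Set.Icc u v) x| ≤ |a| * |ω| ^ i := by
  have hcos : ContDiff ℝ i (fun x => cos (ω * x)) :=
    contDiff_cos.comp (contDiff_const.mul contDiff_id)
  rw [iteratedDerivWithin_eq_iteratedDeriv (uniqueDiffOn_Icc huv)
      (contDiff_const.mul hcos).contDiffAt hx, iteratedDeriv_const_mul_field,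
    iteratedDeriv_comp_const_mul contDiff_cos, abs_mul, abs_mul, abs_pow]
  gcongr
  exact mul_le_of_le_one_right (by positivity) (abs_iteratedDeriv_cos_le_one i _)

lemma bernstein'_const_mul (m : ℕ) (a : ℝ) (g : ℝ → ℝ) (p : ℝ) :
    bernstein' m (fun x => a * g x) p = a * bernstein' m g p := by
  rw [bernstein', bernstein', mul_sum]
  exact sum_congr rfl fun k _ => by ring

lemma continuous_bernstein' (m : ℕ) (g : ℝ → ℝ) : Continuous (bernstein' m g) := by
  unfold bernstein'
  fun_prop

lemma half_mul_exp_add_half (w : ℂ) :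
    Complex.exp (w * Complex.I) / 2 + 1 / 2 =
      Complex.exp (w / 2 * Complex.I) * Complex.cos (w / 2) := by
  rw [Complex.cos, mul_div_assoc', mul_add, ← Complex.exp_add, ← Complex.exp_add]
  ring_nf
  rw [Complex.exp_zero]
  ring

lemma bernstein'_cos_half {m : ℕ} (hm : m ≠ 0) (ω : ℝ) :
    bernstein' m (fun x => cos (ω * x)) (1 / 2) = cos (ω / 2) * cos (ω / (2 * m)) ^ m := by
  have hbinom : bernstein' m (fun x => cos (ω * x)) (1 / 2) =
      ((Complex.exp ((ω / m : ℝ) * Complex.I) / 2 + 1 / 2) ^ m).re := by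
    rw [add_pow, Complex.re_sum, bernstein']
    refine sum_congr rfl fun k _ => ?_
    have hterm : (Complex.exp ((ω / m : ℝ) * Complex.I) / 2) ^ k * (1 / 2) ^ (m - k) * m.choose k
        = ((m.choose k * (1 / 2) ^ k * (1 - 1 / 2) ^ (m - k) : ℝ) : ℂ) *
          Complex.exp ((ω * (k / m) : ℝ) * Complex.I) := by
      rw [div_pow, ← Complex.exp_nat_mul, show (1 : ℝ) - 1 / 2 = 1 / 2 by norm_num]
      push_cast
      simp only [one_div, inv_pow]
      ring_nf
    rw [hterm, Complex.re_ofReal_mul, Complex.exp_ofReal_mul_I_re]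
  have hexp : (m : ℂ) * ((ω / m : ℝ) / 2 * Complex.I) = (ω / 2 : ℝ) * Complex.I := by
    have hm' : (m : ℂ) ≠ 0 := Nat.cast_ne_zero.mpr hm
    push_cast
    field_simp
  have hcos : ((ω / m : ℝ) : ℂ) / 2 = (ω / (2 * m) : ℝ) := by
    push_cast
    ring
  rw [hbinom, half_mul_exp_add_half, mul_pow, ← Complex.exp_nat_mul, hexp, hcos,
    ← Complex.ofReal_cos, ← Complex.ofReal_pow, Complex.re_mul_ofReal,
    Complex.exp_ofReal_mul_I_re]

lemma bernstein'_cos_two_pi_mul_half {m n : ℕ} (hm : m ≠ 0) (hmn : m ≤ n) :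
    bernstein' m (fun x => cos (2 * π * n * x)) (1 / 2) =
      (-1) ^ (n - m) * cos (π * (n - m : ℕ) / m) ^ m := by
  obtain ⟨d, rfl⟩ := Nat.exists_eq_add_of_le hmn
  have hm' : (m : ℝ) ≠ 0 := Nat.cast_ne_zero.mpr hm
  have harg : 2 * π * (m + d : ℕ) / (2 * m) = π * d / m + π := by
    push_cast
    field_simp
    ring
  rw [bernstein'_cos_half hm, harg, Real.cos_add_pi, Nat.add_sub_cancel_left,
    show 2 * π * (m + d : ℕ) / 2 = (m + d : ℕ) * π by ring, Real.cos_nat_mul_pi,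
    neg_pow (cos _), ← mul_assoc, ← pow_add, show m + d + m = 2 * m + d by ring, pow_add,
    pow_mul, neg_one_sq, one_pow, one_mul]

lemma jackCoeff_sign {r : ℕ} {ns : Fin r → ℕ} (hns : StrictMono ns) (i : Fin r) :
    0 ≤ (-1) ^ (r - 1 - i) * jackCoeff ns i := by
  have hfactor : ∀ j ∈ univ.erase i,
      0 ≤ (if i < j then -1 else 1) * ((ns i : ℝ) / (ns i - ns j)) := by
    intro j hj
    rcases lt_or_gt_of_ne (ne_of_mem_erase hj) with hji | hij
    · have : (ns j : ℝ) < ns i := by exact_mod_cast hns hji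
      rw [if_neg hji.not_gt, one_mul]
      exact div_nonneg (Nat.cast_nonneg _) (by linarith)
    · have : (ns i : ℝ) < ns j := by exact_mod_cast hns hij
      rw [if_pos hij, neg_one_mul, neg_nonneg]
      exact div_nonpos_of_nonneg_of_nonpos (Nat.cast_nonneg _) (by linarith)
  have hupper : (univ.erase i).filter (i < ·) = Ioi i := by
    ext j
    simp only [mem_filter, mem_erase, mem_univ, mem_Ioi, and_true]
    exact ⟨And.right, fun h => ⟨h.ne', h⟩⟩
  calc 0 ≤ ∏ j ∈ univ.erase i,
        (if i < j then (-1 : ℝ) else 1) * ((ns i : ℝ) / (ns i - ns j)) := prod_nonneg hfactor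
    _ = (-1) ^ (r - 1 - i) * jackCoeff ns i := by
        rw [prod_mul_distrib, prod_ite, prod_const, prod_const_one, hupper, Fin.card_Ioi,
          mul_one, jackCoeff]

lemma pow_div_le_jackCoeff {r : ℕ} {ns : Fin r → ℕ} {i : Fin r} {D : ℝ}
    (hlt : ∀ j ≠ i, ns j < ns i) (hD : ∀ j, (ns i : ℝ) - ns j ≤ D) :
    ((ns i : ℝ) / D) ^ (r - 1) ≤ jackCoeff ns i := by
  have hcard : #(univ.erase i) = r - 1 := by
    rw [card_erase_of_mem (mem_univ i), card_univ, Fintype.card_fin]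
  rw [jackCoeff, ← hcard, ← prod_const]
  have hpos : ∀ j ∈ univ.erase i, (0 : ℝ) < ns i - ns j := fun j hj =>
    sub_pos.mpr (by exact_mod_cast hlt j (ne_of_mem_erase hj))
  exact prod_le_prod (fun j hj => div_nonneg (Nat.cast_nonneg _) ((hpos j hj).trans_le (hD j)).le)
    (fun j hj => div_le_div_of_nonneg_left (Nat.cast_nonneg _) (hpos j hj) (hD j))

lemma abs_sub_le_jackBias {r : ℕ} (ns : Fin r → ℕ) {f : ℝ → ℝ} (hf : Continuous f) {p : ℝ}
    (hp : p ∈ Set.Icc (0 : ℝ) 1) :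
    |(∑ i, jackCoeff ns i * bernstein' (ns i) f p) - f p| ≤ jackBias ns f := by
  have hcont : Continuous fun p => |(∑ i, jackCoeff ns i * bernstein' (ns i) f p) - f p| := by
    have := fun i => continuous_bernstein' (ns i) f
    fun_prop
  exact le_csSup (isCompact_Icc.image hcont).bddAbove ⟨p, hp, rfl⟩

lemma pow_div_le_jackCoeff_last {r n : ℕ} (hr : 0 < r) (hrn : r ≤ n) :
    ((n : ℝ) / r) ^ (r - 1) ≤
      jackCoeff (fun i : Fin r => n - r + 1 + i.val) ⟨r - 1, by omega⟩ := by
  have h := pow_div_le_jackCoeff (ns := fun i : Fin r => n - r + 1 + i.val) (i := ⟨r - 1, by omega⟩)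
    (D := r) (fun j hj => by have := Fin.val_ne_of_ne hj; simp only at this ⊢; omega)
    (fun j => by
      have := j.isLt
      simp only
      rw [← Nat.cast_sub (by omega)]
      exact_mod_cast (by omega))
  rwa [show n - r + 1 + (r - 1) = n by omega] at h

lemma jackBias_cos_two_pi_mul_ge {r n : ℕ} (hr : 0 < r) (hn : 3 * r ≤ n) {a : ℝ}
    (ha : 0 ≤ a) :
    a * (((n : ℝ) / r) ^ (r - 1) - 1) ≤
      jackBias (fun i : Fin r => n - r + 1 + i.val) (fun x => a * cos (2 * π * n * x)) := by
  set ns : Fin r → ℕ := fun i => n - r + 1 + i.val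
  set f : ℝ → ℝ := fun x => a * cos (2 * π * n * x)
  have hns : StrictMono ns := fun i j hij => by simp only [ns]; omega
  have hns_val : ∀ i : Fin r, ns i = n - r + 1 + i ∧ (i : ℕ) < r := fun i => ⟨rfl, i.isLt⟩
  have hbern : ∀ i, bernstein' (ns i) f (1 / 2) =
      a * ((-1) ^ (r - 1 - i) * cos (π * (r - 1 - i : ℕ) / ns i) ^ ns i) := by
    intro i
    have := hns_val i
    rw [bernstein'_const_mul, bernstein'_cos_two_pi_mul_half (by omega) (by omega),
      show n - ns i = r - 1 - i by omega]
  have hterm : ∀ i, 0 ≤ jackCoeff ns i * bernstein' (ns i) f (1 / 2) := by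
    intro i
    have := hns_val i
    have hcos : 0 ≤ cos (π * (r - 1 - i : ℕ) / ns i) := by
      have hd : 2 * ((r - 1 - i : ℕ) : ℝ) ≤ ns i := by exact_mod_cast (by omega)
      have hpos : (0 : ℝ) < ns i := by exact_mod_cast (by omega)
      have hnonneg : 0 ≤ π * (r - 1 - i : ℕ) / ns i := by positivity
      refine cos_nonneg_of_mem_Icc ⟨by linarith [pi_pos], ?_⟩
      rw [div_le_iff₀ hpos]
      nlinarith [pi_pos]
    have := mul_nonneg (mul_nonneg ha (pow_nonneg hcos (ns i))) (jackCoeff_sign hns i)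
    rw [hbern]
    linarith
  set top : Fin r := ⟨r - 1, by omega⟩
  have htop :
      ((n : ℝ) / r) ^ (r - 1) * a ≤ jackCoeff ns top * bernstein' (ns top) f (1 / 2) := by
    rw [hbern, show r - 1 - top = 0 by simp [top], show ns top = n by simp only [ns, top]; omega]
    simp only [pow_zero, CharP.cast_eq_zero, mul_zero, zero_div, cos_zero, one_pow, mul_one]
    exact mul_le_mul_of_nonneg_right (pow_div_le_jackCoeff_last hr (by omega)) ha
  have hf_half : |f (1 / 2)| ≤ a := by
    simpa [f, abs_mul, abs_of_nonneg ha] using mul_le_of_le_one_right ha (abs_cos_le_one _)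
  set S := ∑ i, jackCoeff ns i * bernstein' (ns i) f (1 / 2)
  calc a * (((n : ℝ) / r) ^ (r - 1) - 1) ≤ S - |f (1 / 2)| := by
        linarith [single_le_sum (fun i _ => hterm i) (mem_univ top)]
    _ ≤ |S - f (1 / 2)| := by linarith [le_abs_self (f (1 / 2)), le_abs_self (S - f (1 / 2))]
    _ ≤ jackBias ns f := abs_sub_le_jackBias ns (by fun_prop) ⟨by norm_num, by norm_num⟩

theorem delete_one_jackknife_Ds_converse_general (r s : ℕ) (hr : 2 ≤ r) :
    ∃ c > 0, ∃ N : ℕ, ∀ n ≥ N, ∃ f : ℝ → ℝ,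
      ContDiffOn ℝ s f (Set.Icc 0 1) ∧
      (∀ i ≤ s, ∀ x ∈ Set.Icc (0:ℝ) 1, |iteratedDerivWithin i f (Set.Icc 0 1) x| ≤ 1) ∧
      c * (n : ℝ) ^ ((r : ℝ) - 1 - (s : ℝ)) ≤
        jackBias (fun i : Fin r => n - r + 1 + i.val) f := by
  refine ⟨(2 * (2 * π) ^ s * r ^ (r - 1))⁻¹, by positivity, 3 * r, fun n hn => ?_⟩
  have hn_pos : (0 : ℝ) < n := by exact_mod_cast (by omega : 0 < n)
  have hω : 1 ≤ 2 * π * n := by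
    nlinarith [pi_gt_three, (by exact_mod_cast (by omega : 1 ≤ n) : (1 : ℝ) ≤ n)]
  set a := ((2 * π * n) ^ s)⁻¹
  have ha : 0 < a := by positivity
  refine ⟨fun x => a * cos (2 * π * n * x), by fun_prop, fun i hi x hx => ?_, ?_⟩
  · calc |iteratedDerivWithin i (fun x => a * cos (2 * π * n * x)) (Set.Icc 0 1) x|
        ≤ |a| * |2 * π * n| ^ i := abs_iteratedDerivWithin_Icc_const_mul_cos_le i a _ one_pos hx
      _ ≤ a * (2 * π * n) ^ s := by
        rw [abs_of_pos ha, abs_of_pos (by linarith)]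
        gcongr
      _ = 1 := inv_mul_cancel₀ (by positivity)
  · have htwo : 2 ≤ ((n : ℝ) / r) ^ (r - 1) := by
      have h3 : (3 : ℝ) ≤ n / r := by
        rw [le_div_iff₀ (by positivity)]
        exact_mod_cast hn
      calc (2 : ℝ) ≤ 3 ^ (r - 1) := le_self_pow₀ (by norm_num) (by omega) |>.trans' (by norm_num)
        _ ≤ ((n : ℝ) / r) ^ (r - 1) := by gcongr
    calc (2 * (2 * π) ^ s * r ^ (r - 1))⁻¹ * (n : ℝ) ^ ((r : ℝ) - 1 - s)
        = a * ((n : ℝ) / r) ^ (r - 1) / 2 := by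
          have hexp : (r : ℝ) - 1 - s = (r - 1 : ℕ) - (s : ℝ) := by
            push_cast [Nat.cast_sub (by omega : 1 ≤ r)]
            ring
          rw [hexp, rpow_sub hn_pos, rpow_natCast, rpow_natCast]
          simp only [a, div_pow, mul_pow]
          field_simp
      _ ≤ a * (((n : ℝ) / r) ^ (r - 1) - 1) := by nlinarith
      _ ≤ _ := jackBias_cos_two_pi_mul_ge (by omega) hn ha.le

/-- for `1 ≤ s ≤ 2r-3`, there are `c > 0`, `N` such that for every `n ≥ N`
some `f ∈ C^s([0,1])` with all derivatives up to order `s` bounded by `1` has delete-1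
`r`-jackknife bias at least `c n^{r-1-s}`. -/
theorem delete_one_jackknife_Ds_converse (r s : ℕ) (hr : 2 ≤ r) (hs1 : 1 ≤ s)
    (hs2 : s ≤ 2 * r - 3) :
    ∃ c > 0, ∃ N : ℕ, ∀ n ≥ N, ∃ f : ℝ → ℝ,
      ContDiffOn ℝ s f (Set.Icc 0 1) ∧
      (∀ i ≤ s, ∀ x ∈ Set.Icc (0:ℝ) 1, |iteratedDerivWithin i f (Set.Icc 0 1) x| ≤ 1) ∧
      c * (n : ℝ) ^ ((r : ℝ) - 1 - (s : ℝ)) ≤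
        jackBias (fun i : Fin r => n - r + 1 + i.val) f :=
  delete_one_jackknife_Ds_converse_general r s hr
end

section
/- Fix an integer n ≥ 1 and any function f : [0,1] → ℝ. Let L_n[f] be the unique polynomial of degree at most n satisfying L_n[f](i/n) = f(i/n) for all integers 0 ≤ i ≤ n, and for m ≥ 1 let e_m = (I − B_n)^m f, i.e. e_1(p) = f(p) − B_n[f](p) and e_m(p) = e_{m−1}(p) − B_n[e_{m−1}](p). Then lim_{m→∞} sup_{p∈[0,1]} | e_m(p) − ( f(p) − L_n[f](p) ) | = 0. -/
/-- Iterated bootstrap bias: `bootIter n f m = (I − B_n)^m f`. -/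
noncomputable def bootIter (n : ℕ) (f : ℝ → ℝ) : ℕ → ℝ → ℝ
  | 0 => f
  | m + 1 => fun p => bootIter n f m p - bernstein' n (bootIter n f m) p

open Finset Polynomial

theorem sum_choose_mul_bernsteinPolynomial {R : Type*} [CommRing R] (n j : ℕ) :
    ∑ k ∈ range (n + 1), (k.choose j : R[X]) * bernsteinPolynomial R n k
      = (n.choose j : R[X]) * X ^ j := by
  rcases lt_or_ge n j with hnj | hjn
  · rw [Nat.choose_eq_zero_of_lt hnj, Nat.cast_zero, zero_mul]
    refine sum_eq_zero fun k hk => ?_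
    rw [Nat.choose_eq_zero_of_lt ((mem_range.1 hk).trans_le (by omega)), Nat.cast_zero, zero_mul]
  obtain ⟨i, rfl⟩ := exists_add_of_le hjn
  have hterm : ∀ l ∈ range (i + 1),
      ((j + l).choose j : R[X]) * bernsteinPolynomial R (j + i) (j + l) =
        ((j + i).choose j : R[X]) * X ^ j * bernsteinPolynomial R i l := by
    intro l _
    have hchoose := congrArg (Nat.cast : ℕ → R[X])
      (Nat.choose_mul (n := j + i) (Nat.le_add_right j l))
    simp only [Nat.add_sub_cancel_left, Nat.cast_mul] at hchoose
    simp only [bernsteinPolynomial, Nat.add_sub_add_left, pow_add]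
    linear_combination (X ^ j * X ^ l * (1 - X) ^ (i - l) : R[X]) * hchoose
  rw [add_assoc, sum_range_add, sum_eq_zero fun k hk => by
      rw [Nat.choose_eq_zero_of_lt (mem_range.1 hk), Nat.cast_zero, zero_mul],
    zero_add, sum_congr rfl hterm, ← mul_sum, bernsteinPolynomial.sum, mul_one]

theorem sum_smul_bernsteinPolynomial_eq_sum_fwdDiff {R : Type*} [CommRing R] (n : ℕ) (g : R → R) :
    ∑ k ∈ range (n + 1), g k • bernsteinPolynomial R n k
      = ∑ j ∈ range (n + 1), (n.choose j * (fwdDiff 1)^[j] g 0) • (X : R[X]) ^ j := by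
  have hnewton : ∀ k ∈ range (n + 1),
      g k = ∑ j ∈ range (n + 1), (k.choose j : R) * (fwdDiff 1)^[j] g 0 := by
    intro k hk
    rw [← sum_subset (range_subset_range.2 (mem_range.1 hk)) fun j _ hj => by
      rw [Nat.choose_eq_zero_of_lt (by simpa using hj), Nat.cast_zero, zero_mul]]
    simpa [nsmul_eq_mul] using shift_eq_sum_fwdDiff_iter (1 : R) g k 0
  calc ∑ k ∈ range (n + 1), g k • bernsteinPolynomial R n k
      = ∑ k ∈ range (n + 1), ∑ j ∈ range (n + 1),
          ((k.choose j : R) * (fwdDiff 1)^[j] g 0) • bernsteinPolynomial R n k :=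
        sum_congr rfl fun k hk => by rw [hnewton k hk, sum_smul]
    _ = ∑ j ∈ range (n + 1), (fwdDiff 1)^[j] g 0 •
          ∑ k ∈ range (n + 1), (k.choose j : R[X]) * bernsteinPolynomial R n k := by
        rw [sum_comm]
        refine sum_congr rfl fun j _ => ?_
        rw [smul_sum]
        refine sum_congr rfl fun k _ => ?_
        simp only [smul_eq_C_mul, map_mul, map_natCast]
        ring
    _ = _ := by
        simp only [sum_choose_mul_bernsteinPolynomial, smul_eq_C_mul, map_mul, map_natCast]
        exact sum_congr rfl fun j _ => by ring

noncomputable def weightedCoeffNorm (η : ℝ) (N : ℕ) (q : ℝ[X]) : ℝ :=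
  ∑ k ∈ range (N + 1), η ^ k * |q.coeff k|

section weightedCoeffNorm

variable {η : ℝ} {N : ℕ}

lemma weightedCoeffNorm_nonneg (hη : 0 ≤ η) (q : ℝ[X]) : 0 ≤ weightedCoeffNorm η N q :=
  sum_nonneg fun _ _ => by positivity

lemma weightedCoeffNorm_sum_smul_le {ι : Type*} (hη : 0 ≤ η) (s : Finset ι) (c : ι → ℝ)
    (P : ι → ℝ[X]) :
    weightedCoeffNorm η N (∑ i ∈ s, c i • P i) ≤ ∑ i ∈ s, |c i| * weightedCoeffNorm η N (P i) := by
  simp only [weightedCoeffNorm, finsetSum_coeff, coeff_smul, smul_eq_mul, mul_sum]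
  rw [sum_comm]
  refine sum_le_sum fun k _ => ?_
  calc η ^ k * |∑ i ∈ s, c i * (P i).coeff k|
      ≤ η ^ k * ∑ i ∈ s, |c i| * |(P i).coeff k| := by
        gcongr
        exact (abs_sum_le_sum_abs _ _).trans_eq (by simp only [abs_mul])
    _ = _ := by rw [mul_sum]; exact sum_congr rfl fun i _ => by ring

lemma abs_eval_le_weightedCoeffNorm (hη : 1 ≤ η) {q : ℝ[X]} (hq : q.natDegree ≤ N) {p : ℝ}
    (hp : p ∈ Set.Icc (0 : ℝ) 1) : |q.eval p| ≤ weightedCoeffNorm η N q := by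
  rw [eval_eq_sum_range' (Nat.lt_succ_of_le hq)]
  refine (abs_sum_le_sum_abs _ _).trans (sum_le_sum fun k _ => ?_)
  rw [abs_mul, abs_pow, abs_of_nonneg hp.1, mul_comm]
  exact mul_le_mul_of_nonneg_right ((pow_le_one₀ hp.1 hp.2).trans (one_le_pow₀ hη)) (abs_nonneg _)

end weightedCoeffNorm

section UpperTriangular

variable (T : ℝ[X] →ₗ[ℝ] ℝ[X]) {N : ℕ}

lemma map_eq_sum_coeff_smul_X_pow {q : ℝ[X]} (hq : q.natDegree ≤ N) :
    T q = ∑ e ∈ range (N + 1), q.coeff e • T (X ^ e) := by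
  conv_lhs => rw [as_sum_range' q (N + 1) (Nat.lt_succ_of_le hq)]
  simp only [map_sum, ← smul_X_eq_monomial, map_smul]

variable {T}

lemma natDegree_map_le_of_natDegree_map_X_pow_le (hT : ∀ e ≤ N, (T (X ^ e)).natDegree ≤ e)
    {q : ℝ[X]} (hq : q.natDegree ≤ N) : (T q).natDegree ≤ N := by
  rw [map_eq_sum_coeff_smul_X_pow T hq]
  refine natDegree_sum_le_of_forall_le _ _ fun e he => ?_
  have he : e ≤ N := Nat.lt_succ_iff.1 (mem_range.1 he)
  exact (natDegree_smul_le _ _).trans ((hT e he).trans he)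

lemma weightedCoeffNorm_map_le {η ρ : ℝ} (hη : 0 ≤ η)
    (hcol : ∀ e ≤ N, weightedCoeffNorm η N (T (X ^ e)) ≤ ρ * η ^ e)
    {q : ℝ[X]} (hq : q.natDegree ≤ N) :
    weightedCoeffNorm η N (T q) ≤ ρ * weightedCoeffNorm η N q := by
  rw [map_eq_sum_coeff_smul_X_pow T hq]
  refine (weightedCoeffNorm_sum_smul_le hη _ _ _).trans ?_
  rw [weightedCoeffNorm, mul_sum]
  refine sum_le_sum fun e he => ?_
  calc |q.coeff e| * weightedCoeffNorm η N (T (X ^ e))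
      ≤ |q.coeff e| * (ρ * η ^ e) := by
        gcongr
        exact hcol e (Nat.lt_succ_iff.1 (mem_range.1 he))
    _ = ρ * (η ^ e * |q.coeff e|) := by ring

lemma exists_weightedCoeffNorm_contraction (hT : ∀ e ≤ N, (T (X ^ e)).natDegree ≤ e)
    (hdiag : ∀ e ≤ N, |(T (X ^ e)).coeff e| < 1) :
    ∃ η ρ : ℝ, 1 ≤ η ∧ 0 ≤ ρ ∧ ρ < 1 ∧
      ∀ e ≤ N, weightedCoeffNorm η N (T (X ^ e)) ≤ ρ * η ^ e := by
  set d : ℕ → ℝ := fun e => |(T (X ^ e)).coeff e|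
  set μ := (range (N + 1)).sup' nonempty_range_add_one d
  have hμ_lt : μ < 1 := (sup'_lt_iff _).2 fun e he => hdiag e (Nat.lt_succ_iff.1 (mem_range.1 he))
  have hμ_nonneg : 0 ≤ μ := (abs_nonneg _).trans (le_sup' d (mem_range.2 N.succ_pos))
  set δ := (1 - μ) / 2
  have hδ : 0 < δ := by simp only [δ]; linarith
  set C := ∑ e ∈ range (N + 1), ∑ k ∈ range e, |(T (X ^ e)).coeff k|
  set η := max 1 (C / δ)
  have hη : 1 ≤ η := le_max_left _ _
  have hCη : C ≤ η * δ := (div_le_iff₀ hδ).1 (le_max_right _ _)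
  refine ⟨η, μ + δ, hη, by positivity, by simp only [δ]; linarith, fun e he => ?_⟩
  have hlower : ∑ k ∈ range e, η ^ k * |(T (X ^ e)).coeff k| ≤ η ^ e * δ := by
    refine le_of_mul_le_mul_right ?_ (zero_lt_one.trans_le hη)
    calc (∑ k ∈ range e, η ^ k * |(T (X ^ e)).coeff k|) * η
        ≤ ∑ k ∈ range e, η ^ e * |(T (X ^ e)).coeff k| := by
          rw [sum_mul]
          refine sum_le_sum fun k hk => ?_
          rw [mul_right_comm, ← pow_succ]
          gcongr
          exact mem_range.1 hk
      _ ≤ η ^ e * C := by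
          rw [← mul_sum]
          gcongr
          exact single_le_sum (f := fun e => ∑ k ∈ range e, |(T (X ^ e)).coeff k|)
            (fun _ _ => sum_nonneg fun _ _ => abs_nonneg _) (mem_range.2 (Nat.lt_succ_of_le he))
      _ ≤ η ^ e * (η * δ) := by gcongr
      _ = η ^ e * δ * η := by ring
  have hdiag_le : d e ≤ μ := le_sup' d (mem_range.2 (Nat.lt_succ_of_le he))
  calc weightedCoeffNorm η N (T (X ^ e))
      = ∑ k ∈ range (e + 1), η ^ k * |(T (X ^ e)).coeff k| := by
        refine (sum_subset (range_subset_range.2 (Nat.succ_le_succ he)) fun k _ hk => ?_).symm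
        rw [coeff_eq_zero_of_natDegree_lt ((hT e he).trans_lt (by simpa using hk)), abs_zero,
          mul_zero]
    _ ≤ η ^ e * δ + η ^ e * μ := by
        rw [sum_range_succ]
        gcongr
    _ = (μ + δ) * η ^ e := by ring

theorem exists_bound_abs_eval_iterate (hT : ∀ e ≤ N, (T (X ^ e)).natDegree ≤ e)
    (hdiag : ∀ e ≤ N, |(T (X ^ e)).coeff e| < 1) {q : ℝ[X]} (hq : q.natDegree ≤ N) :
    ∃ C ρ : ℝ, 0 ≤ C ∧ 0 ≤ ρ ∧ ρ < 1 ∧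
      ∀ m, ∀ p ∈ Set.Icc (0 : ℝ) 1, |(T^[m] q).eval p| ≤ C * ρ ^ m := by
  obtain ⟨η, ρ, hη, hρ0, hρ1, hcol⟩ := exists_weightedCoeffNorm_contraction hT hdiag
  have hiter : ∀ m, (T^[m] q).natDegree ≤ N ∧
      weightedCoeffNorm η N (T^[m] q) ≤ weightedCoeffNorm η N q * ρ ^ m := by
    intro m
    induction m with
    | zero => simp [hq]
    | succ m ih =>
      rw [Function.iterate_succ_apply', pow_succ]
      refine ⟨natDegree_map_le_of_natDegree_map_X_pow_le hT ih.1, ?_⟩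
      calc weightedCoeffNorm η N (T (T^[m] q)) ≤ ρ * weightedCoeffNorm η N (T^[m] q) :=
            weightedCoeffNorm_map_le (zero_le_one.trans hη) hcol ih.1
        _ ≤ ρ * (weightedCoeffNorm η N q * ρ ^ m) := by gcongr; exact ih.2
        _ = _ := by ring
  exact ⟨weightedCoeffNorm η N q, ρ, weightedCoeffNorm_nonneg (zero_le_one.trans hη) q, hρ0, hρ1,
    fun m p hp => (abs_eval_le_weightedCoeffNorm hη (hiter m).1 hp).trans (hiter m).2⟩

end UpperTriangular

noncomputable def bernsteinOp (n : ℕ) : ℝ[X] →ₗ[ℝ] ℝ[X] :=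
  ∑ k ∈ range (n + 1), (leval ((k : ℝ) / n)).smulRight (bernsteinPolynomial ℝ n k)

noncomputable def biasOp (n : ℕ) : ℝ[X] →ₗ[ℝ] ℝ[X] := LinearMap.id - bernsteinOp n

section Bernstein

variable (n : ℕ)

lemma bernsteinOp_apply (q : ℝ[X]) :
    bernsteinOp n q = ∑ k ∈ range (n + 1), q.eval ((k : ℝ) / n) • bernsteinPolynomial ℝ n k := by
  simp [bernsteinOp]

lemma eval_bernsteinOp (q : ℝ[X]) (p : ℝ) :
    (bernsteinOp n q).eval p = bernstein' n (fun x => q.eval x) p := by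
  simp only [bernsteinOp_apply, bernstein', bernsteinPolynomial, eval_finsetSum, eval_smul,
    eval_mul, eval_pow, eval_natCast, eval_sub, eval_one, eval_X, smul_eq_mul]
  exact sum_congr rfl fun k _ => by ring

lemma bernsteinOp_X_pow (e : ℕ) :
    bernsteinOp n (X ^ e) = ∑ j ∈ range (n + 1),
      (n.choose j * (n : ℝ)⁻¹ ^ e * (fwdDiff 1)^[j] (fun x : ℝ => x ^ e) 0) • (X : ℝ[X]) ^ j := by
  have hscale : (fun x : ℝ => (x / n) ^ e) = (n : ℝ)⁻¹ ^ e • fun x : ℝ => x ^ e := by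
    funext x
    simp only [Pi.smul_apply, smul_eq_mul, div_eq_mul_inv, mul_pow, mul_comm]
  simp only [bernsteinOp_apply, eval_pow, eval_X]
  rw [sum_smul_bernsteinPolynomial_eq_sum_fwdDiff (R := ℝ) n fun x => (x / n) ^ e, hscale]
  simp only [fwdDiff_iter_const_smul, Pi.smul_apply, smul_eq_mul, mul_assoc]

lemma natDegree_bernsteinOp_X_pow_le (e : ℕ) : (bernsteinOp n (X ^ e)).natDegree ≤ e := by
  rw [bernsteinOp_X_pow]
  refine natDegree_sum_le_of_forall_le _ _ fun j _ => ?_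
  rcases le_or_gt j e with hje | hej
  · exact (natDegree_smul_le _ _).trans ((natDegree_X_pow j).trans_le hje)
  · simp [fwdDiff_iter_pow_eq_zero_of_lt hej]

lemma coeff_bernsteinOp_X_pow_self {e : ℕ} (he : e ≤ n) :
    (bernsteinOp n (X ^ e)).coeff e = n.descFactorial e / (n : ℝ) ^ e := by
  rw [bernsteinOp_X_pow, finsetSum_coeff, sum_eq_single e (fun j _ hj => by
      rw [coeff_smul, coeff_X_pow, if_neg (Ne.symm hj), smul_zero])
      (fun he' => absurd (mem_range.2 (Nat.lt_succ_of_le he)) he'),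
    coeff_smul, coeff_X_pow_self, fwdDiff_iter_eq_factorial,
    Nat.descFactorial_eq_factorial_mul_choose]
  simp [div_eq_mul_inv]
  ring

lemma natDegree_biasOp_X_pow_le (e : ℕ) : (biasOp n (X ^ e)).natDegree ≤ e :=
  (natDegree_sub_le _ _).trans
    (max_le (natDegree_X_pow e).le (natDegree_bernsteinOp_X_pow_le n e))

lemma abs_coeff_biasOp_X_pow_self_lt {e : ℕ} (he : e ≤ n) : |(biasOp n (X ^ e)).coeff e| < 1 := by
  have hpos : 0 < n.descFactorial e := Nat.descFactorial_pos.2 he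
  have hle : n.descFactorial e ≤ n ^ e := Nat.descFactorial_le_pow n e
  have hratio_pos : (0 : ℝ) < n.descFactorial e / (n : ℝ) ^ e := by
    apply div_pos <;> exact_mod_cast hpos.trans_le (by omega)
  have hratio_le : n.descFactorial e / (n : ℝ) ^ e ≤ 1 :=
    div_le_one_of_le₀ (by exact_mod_cast hle) (by positivity)
  rw [biasOp, LinearMap.sub_apply, LinearMap.id_apply, coeff_sub, coeff_X_pow_self,
    coeff_bernsteinOp_X_pow_self n he, abs_lt]
  constructor <;> linarith

lemma bernstein'_congr {g h : ℝ → ℝ} (hgh : ∀ k ≤ n, g ((k : ℝ) / n) = h ((k : ℝ) / n)) :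
    bernstein' n g = bernstein' n h := by
  funext p
  exact sum_congr rfl fun k hk => by rw [hgh k (Nat.lt_succ_iff.1 (mem_range.1 hk))]

lemma bootIter_eq_sub_add_eval_iterate {g : ℝ → ℝ} {q : ℝ[X]}
    (hq : ∀ k ≤ n, q.eval ((k : ℝ) / n) = g ((k : ℝ) / n)) (m : ℕ) :
    bootIter n g m = fun p => g p - q.eval p + ((biasOp n)^[m] q).eval p := by
  induction m with
  | zero => funext p; simp [bootIter]
  | succ m ih =>
    have hnodes :
        bernstein' n (bootIter n g m) = bernstein' n fun x => ((biasOp n)^[m] q).eval x :=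
      bernstein'_congr n fun k hk => by simp only [ih, hq k hk, sub_self, zero_add]
    funext p
    simp only [bootIter]
    rw [hnodes, ← eval_bernsteinOp, ih, Function.iterate_succ_apply', biasOp,
      LinearMap.sub_apply, LinearMap.id_apply, eval_sub]
    ring

end Bernstein

theorem bootstrap_iter_limit_general (n : ℕ) (f : ℝ → ℝ) (L : Polynomial ℝ)
    (hdeg : L.degree ≤ n)
    (hinterp : ∀ i : ℕ, i ≤ n → L.eval ((i : ℝ) / n) = f ((i : ℝ) / n)) :
    Filter.Tendsto
      (fun m => sSup ((fun p => |bootIter n f m p - (f p - L.eval p)|) '' Set.Icc (0:ℝ) 1))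
      Filter.atTop (nhds 0) := by
  obtain ⟨C, ρ, hC, hρ0, hρ1, hbound⟩ := exists_bound_abs_eval_iterate
    (fun e _ => natDegree_biasOp_X_pow_le n e) (fun _ he => abs_coeff_biasOp_X_pow_self_lt n he)
    (natDegree_le_iff_degree_le.2 hdeg)
  have herror : ∀ m p, bootIter n f m p - (f p - L.eval p) = ((biasOp n)^[m] L).eval p := by
    intro m p
    rw [bootIter_eq_sub_add_eval_iterate n hinterp]
    ring
  refine squeeze_zero (g := fun m => C * ρ ^ m) (fun m => Real.sSup_nonneg ?_)
    (fun m => Real.sSup_le ?_ (by positivity))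
    (by simpa using (tendsto_pow_atTop_nhds_zero_of_lt_one hρ0 hρ1).const_mul C)
  · rintro _ ⟨p, -, rfl⟩
    exact abs_nonneg _
  · rintro _ ⟨p, hp, rfl⟩
    simpa only [herror] using hbound m p hp

/-- iterating the bootstrap bias correction infinitely many times, the bias
`e_m = (I − B_n)^m f` converges uniformly on `[0,1]` to `f − L_n[f]`, where `L_n[f]` is the
Lagrange interpolation polynomial of `f` at the equidistant nodes `{i/n : 0 ≤ i ≤ n}`. -/
theorem bootstrap_iter_limit (n : ℕ) (hn : 1 ≤ n) (f : ℝ → ℝ) (L : Polynomial ℝ)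
    (hdeg : L.degree ≤ n)
    (hinterp : ∀ i : ℕ, i ≤ n → L.eval ((i : ℝ) / n) = f ((i : ℝ) / n)) :
    Filter.Tendsto
      (fun m => sSup ((fun p => |bootIter n f m p - (f p - L.eval p)|) '' Set.Icc (0:ℝ) 1))
      Filter.atTop (nhds 0) :=
  bootstrap_iter_limit_general n f L hdeg hinterp
end

section
/- Fix an integer m ≥ 1. Then: (i) for f(p) = −p ln p (with f(0) = 0), there exist constants c_1, c_2 > 0 and N ∈ ℕ depending only on m such that c_1/n ≤ sup_{p∈[0,1]} |(I − B_n)^m f(p)| ≤ c_2/n for all n ≥ N; (ii) for f(p) = p^α with 0 < α < 1, there exist constants c_1, c_2 > 0 and N ∈ ℕ depending only on m and α such that c_1 n^{−α} ≤ sup_{p∈[0,1]} |(I − B_n)^m f(p)| ≤ c_2 n^{−α} for all n ≥ N. In particular, for these functions the first m−1 rounds of bootstrap bias correction do not change the order of the bias. -/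
open Finset Real

section Bernstein

variable {n : ℕ} {g h : ℝ → ℝ} {p : ℝ}

lemma bernstein'_eq_sum_eval (n : ℕ) (g : ℝ → ℝ) (p : ℝ) :
    bernstein' n g p = ∑ k ∈ range (n + 1), (bernsteinPolynomial ℝ n k).eval p * g (k / n) := by
  simp [bernstein', bernsteinPolynomial]

lemma bernstein'_const (n : ℕ) (c p : ℝ) : bernstein' n (fun _ => c) p = c := by
  have h := congrArg (Polynomial.eval p) (bernsteinPolynomial.sum ℝ n)
  rw [Polynomial.eval_finsetSum, Polynomial.eval_one] at h
  rw [bernstein'_eq_sum_eval, ← sum_mul, h, one_mul]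

lemma bernstein'_centered_quadratic (hn : n ≠ 0) (a b c p : ℝ) :
    bernstein' n (fun x => a + b * (x - p) - c * (x - p) ^ 2) p = a - c * (p * (1 - p) / n) := by
  have h₀ := congrArg (Polynomial.eval p) (bernsteinPolynomial.sum ℝ n)
  have h₁ := congrArg (Polynomial.eval p) (bernsteinPolynomial.sum_smul ℝ n)
  have h₂ := congrArg (Polynomial.eval p) (bernsteinPolynomial.variance ℝ n)
  simp only [Polynomial.eval_finsetSum, Polynomial.eval_mul,
    Polynomial.eval_pow, Polynomial.eval_sub, Polynomial.eval_natCast, Polynomial.eval_X,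
    Polynomial.eval_one, nsmul_eq_mul] at h₀ h₁ h₂
  have hn' : (n : ℝ) ≠ 0 := Nat.cast_ne_zero.mpr hn
  rw [bernstein'_eq_sum_eval]
  have hsplit : ∀ k : ℕ,
      (bernsteinPolynomial ℝ n k).eval p * (a + b * (k / n - p) - c * (k / n - p) ^ 2)
        = a * (bernsteinPolynomial ℝ n k).eval p + b / n * (k * (bernsteinPolynomial ℝ n k).eval p)
        - b * p * (bernsteinPolynomial ℝ n k).eval p
        - c / n ^ 2 * ((n * p - k) ^ 2 * (bernsteinPolynomial ℝ n k).eval p) := by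
    intro k; field_simp; ring
  simp only [hsplit, sum_sub_distrib, sum_add_distrib, ← mul_sum, h₀, h₁, h₂]
  field_simp
  ring

lemma bernstein'_mul_id (hn : n ≠ 0) (c p : ℝ) : bernstein' n (fun x => c * x) p = c * p := by
  have h := bernstein'_centered_quadratic hn (c * p) c 0 p
  simp only [zero_mul, sub_zero, mul_sub, add_sub_cancel] at h
  exact h

lemma natCast_div_mem_Icc {k : ℕ} (hk : k ≤ n) : (k : ℝ) / n ∈ Set.Icc (0 : ℝ) 1 :=
  ⟨by positivity, div_le_one_of_le₀ (Nat.cast_le.mpr hk) n.cast_nonneg⟩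

lemma div_natCast_mem_Icc {γ : ℝ} (hn : n ≠ 0) (hγ0 : 0 ≤ γ) (hγ1 : γ ≤ 1) :
    γ / n ∈ Set.Icc (0 : ℝ) 1 :=
  ⟨by positivity, (div_le_self hγ0 (Nat.one_le_cast.mpr (Nat.one_le_iff_ne_zero.mpr hn))).trans hγ1⟩

lemma bernstein'_mono (hp : p ∈ Set.Icc (0 : ℝ) 1) (hgh : ∀ k ≤ n, g (k / n) ≤ h (k / n)) :
    bernstein' n g p ≤ bernstein' n h p := by
  have hq : 0 ≤ 1 - p := sub_nonneg.mpr hp.2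
  have hp0 := hp.1
  refine sum_le_sum fun k hk => mul_le_mul_of_nonneg_left (hgh k ?_) (by positivity)
  exact Nat.lt_succ_iff.mp (mem_range.mp hk)

lemma abs_bernstein'_le_s16 {M : ℝ} (hp : p ∈ Set.Icc (0 : ℝ) 1)
    (hM : ∀ x ∈ Set.Icc (0 : ℝ) 1, |g x| ≤ M) : |bernstein' n g p| ≤ M := by
  have hgrid : ∀ k ≤ n, |g (k / n)| ≤ M := fun k hk => hM _ (natCast_div_mem_Icc hk)
  rw [abs_le]
  constructor
  · simpa only [bernstein'_const] using
      bernstein'_mono (g := fun _ => -M) hp fun k hk => (abs_le.mp (hgrid k hk)).1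
  · simpa only [bernstein'_const] using
      bernstein'_mono (h := fun _ => M) hp fun k hk => (abs_le.mp (hgrid k hk)).2

lemma abs_bernstein'_le_of_map_zero {M : ℝ} (hn : n ≠ 0) (hp : p ∈ Set.Icc (0 : ℝ) 1)
    (hg0 : g 0 = 0) (hM : ∀ x ∈ Set.Icc (0 : ℝ) 1, |g x| ≤ M) :
    |bernstein' n g p| ≤ n * p * M := by
  have hM0 : 0 ≤ M := hg0 ▸ (abs_nonneg _).trans (hM 0 ⟨le_rfl, zero_le_one⟩)
  have hn' : (n : ℝ) ≠ 0 := Nat.cast_ne_zero.mpr hn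
  have hgrid : ∀ k ≤ n, |g (k / n)| ≤ n * M * (k / n) := by
    intro k hk
    rw [mul_comm (n : ℝ) M, mul_assoc, mul_div_cancel₀ _ hn']
    rcases Nat.eq_zero_or_pos k with rfl | hk0
    · simp [hg0]
    · exact (hM _ (natCast_div_mem_Icc hk)).trans
        (le_mul_of_one_le_right hM0 (Nat.one_le_cast.mpr hk0))
  rw [abs_le]
  constructor
  · have h := bernstein'_mono (g := fun x => -(n * M) * x) hp fun k hk => by
      simpa [neg_mul] using (abs_le.mp (hgrid k hk)).1
    rw [bernstein'_mul_id hn] at h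
    linarith
  · have h := bernstein'_mono (h := fun x => n * M * x) hp fun k hk => (abs_le.mp (hgrid k hk)).2
    rw [bernstein'_mul_id hn] at h
    linarith

lemma bernstein'_apply_zero (n : ℕ) (g : ℝ → ℝ) : bernstein' n g 0 = g 0 := by
  rw [bernstein', sum_eq_single 0 (fun k _ hk => by simp [zero_pow hk]) (by simp)]
  simp

end Bernstein

section BootIter

variable {n : ℕ} {f : ℝ → ℝ} {p U : ℝ}

lemma bootIter_succ_apply (n : ℕ) (f : ℝ → ℝ) (j : ℕ) (p : ℝ) :
    bootIter n f (j + 1) p = bootIter n f j p - bernstein' n (bootIter n f j) p := rfl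

lemma bootIter_apply_zero (hf0 : f 0 = 0) (j : ℕ) : bootIter n f j 0 = 0 := by
  induction j with
  | zero => exact hf0
  | succ j ih => rw [bootIter_succ_apply, bernstein'_apply_zero, ih, sub_zero]

lemma abs_bootIter_succ_le (hU : ∀ p ∈ Set.Icc (0 : ℝ) 1, |bootIter n f 1 p| ≤ U) (j : ℕ) :
    ∀ p ∈ Set.Icc (0 : ℝ) 1, |bootIter n f (j + 1) p| ≤ 2 ^ j * U := by
  induction j with
  | zero => simpa using hU
  | succ j ih =>
    intro p hp
    calc |bootIter n f (j + 1 + 1) p|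
        ≤ |bootIter n f (j + 1) p| + |bernstein' n (bootIter n f (j + 1)) p| := abs_sub _ _
      _ ≤ 2 ^ j * U + 2 ^ j * U := add_le_add (ih p hp) (abs_bernstein'_le_s16 hp ih)
      _ = 2 ^ (j + 1) * U := by ring

lemma bootIter_one_sub_le_bootIter_succ (hn : n ≠ 0) (hf0 : f 0 = 0)
    (hU : ∀ p ∈ Set.Icc (0 : ℝ) 1, |bootIter n f 1 p| ≤ U) (hp : p ∈ Set.Icc (0 : ℝ) 1)
    (m : ℕ) : bootIter n f 1 p - n * p * ((2 ^ m - 1) * U) ≤ bootIter n f (m + 1) p := by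
  induction m with
  | zero => simp
  | succ m ih =>
    have hB := abs_bernstein'_le_of_map_zero hn hp (bootIter_apply_zero hf0 (m + 1))
      (abs_bootIter_succ_le hU m)
    calc bootIter n f 1 p - n * p * ((2 ^ (m + 1) - 1) * U)
        = bootIter n f 1 p - n * p * ((2 ^ m - 1) * U) - n * p * (2 ^ m * U) := by ring
      _ ≤ bootIter n f (m + 1) p - bernstein' n (bootIter n f (m + 1)) p :=
        sub_le_sub ih (abs_le.mp hB).2

lemma bootIter_one_nonneg_of_le_tangent {s : ℝ} (hn : n ≠ 0) (hp : p ∈ Set.Icc (0 : ℝ) 1)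
    (hf : ∀ x ∈ Set.Icc (0 : ℝ) 1, f x ≤ f p + s * (x - p)) : 0 ≤ bootIter n f 1 p := by
  have h := bernstein'_mono (n := n) (h := fun x => f p + s * (x - p) - 0 * (x - p) ^ 2) hp
    fun k hk => by simpa using hf _ (natCast_div_mem_Icc hk)
  rw [bernstein'_centered_quadratic hn] at h
  simp only [zero_mul, sub_zero] at h
  exact sub_nonneg.mpr h

lemma bootIter_one_le_of_quadratic_le {s K : ℝ} (hn : n ≠ 0) (hp : p ∈ Set.Icc (0 : ℝ) 1)
    (hf : ∀ x ∈ Set.Icc (0 : ℝ) 1, f p + s * (x - p) - K * (x - p) ^ 2 ≤ f x) :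
    bootIter n f 1 p ≤ K * (p * (1 - p) / n) := by
  have h := bernstein'_mono (n := n) (g := fun x => f p + s * (x - p) - K * (x - p) ^ 2) hp
    fun k hk => hf _ (natCast_div_mem_Icc hk)
  rw [bernstein'_centered_quadratic hn] at h
  show f p - bernstein' n f p ≤ _
  linarith

lemma sub_mul_le_bootIter_one {L : ℝ} (hn : n ≠ 0) (hp : p ∈ Set.Icc (0 : ℝ) 1)
    (hf : ∀ k ≤ n, f (k / n) ≤ L * (k / n)) : f p - L * p ≤ bootIter n f 1 p := by
  have h := bernstein'_mono (h := fun x => L * x) hp hf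
  rw [bernstein'_mul_id hn] at h
  show _ ≤ f p - bernstein' n f p
  linarith

end BootIter

lemma le_sSup_image_abs_and_le {g : ℝ → ℝ} {s : Set ℝ} {x₀ L C : ℝ} (hx₀ : x₀ ∈ s)
    (hL : L ≤ g x₀) (hC : ∀ x ∈ s, |g x| ≤ C) :
    L ≤ sSup ((fun x => |g x|) '' s) ∧ sSup ((fun x => |g x|) '' s) ≤ C := by
  have hbdd : BddAbove ((fun x => |g x|) '' s) := ⟨C, Set.forall_mem_image.mpr hC⟩
  exact ⟨hL.trans ((le_abs_self _).trans (le_csSup hbdd (Set.mem_image_of_mem _ hx₀))),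
    csSup_le (Set.image_nonempty.mpr ⟨x₀, hx₀⟩) (Set.forall_mem_image.mpr hC)⟩

theorem sSup_abs_bootIter_succ_bounds {n : ℕ} {f : ℝ → ℝ} {U γ : ℝ} (hn : n ≠ 0) (hf0 : f 0 = 0)
    (hU : ∀ p ∈ Set.Icc (0 : ℝ) 1, |bootIter n f 1 p| ≤ U) (hγ0 : 0 ≤ γ) (hγ1 : γ ≤ 1)
    (m : ℕ) :
    bootIter n f 1 (γ / n) - γ * ((2 ^ m - 1) * U) ≤
        sSup ((fun p => |bootIter n f (m + 1) p|) '' Set.Icc 0 1) ∧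
      sSup ((fun p => |bootIter n f (m + 1) p|) '' Set.Icc 0 1) ≤ 2 ^ m * U := by
  have hp := div_natCast_mem_Icc hn hγ0 hγ1
  have hlow := bootIter_one_sub_le_bootIter_succ hn hf0 hU hp m
  rw [mul_div_cancel₀ _ (Nat.cast_ne_zero.mpr hn)] at hlow
  exact le_sSup_image_abs_and_le hp hlow (abs_bootIter_succ_le hU m)

section NegMulLog

variable {n : ℕ} {p x : ℝ}

lemma mul_one_sub_le_negMulLog {t : ℝ} (ht : 0 ≤ t) : t * (1 - t) ≤ negMulLog t := by
  rcases ht.eq_or_lt with rfl | ht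
  · simp
  · rw [negMulLog]
    nlinarith [log_le_sub_one_of_pos ht]

lemma negMulLog_le_add_mul_sub (hp : 0 < p) (hx : 0 ≤ x) :
    negMulLog x ≤ negMulLog p + (-log p - 1) * (x - p) := by
  have hscale := negMulLog_mul p (x / p)
  rw [mul_div_cancel₀ _ hp.ne'] at hscale
  have h := mul_le_mul_of_nonneg_left (negMulLog_le_one_sub_self (div_nonneg hx hp.le)) hp.le
  have e : x / p * negMulLog p = -x * log p := by rw [negMulLog]; field_simp
  rw [mul_one_sub, mul_div_cancel₀ _ hp.ne'] at h
  have hp' : negMulLog p = -p * log p := rfl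
  rw [hscale, e]
  linarith

lemma add_mul_sub_sub_le_negMulLog (hp : 0 < p) (hx : 0 ≤ x) :
    negMulLog p + (-log p - 1) * (x - p) - p⁻¹ * (x - p) ^ 2 ≤ negMulLog x := by
  have hscale := negMulLog_mul p (x / p)
  rw [mul_div_cancel₀ _ hp.ne'] at hscale
  have h := mul_le_mul_of_nonneg_left (mul_one_sub_le_negMulLog (div_nonneg hx hp.le)) hp.le
  have e : x / p * negMulLog p = -x * log p := by rw [negMulLog]; field_simp
  have e' : p * (x / p * (1 - x / p)) = x - p⁻¹ * x ^ 2 := by field_simp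
  rw [e'] at h
  have hp' : negMulLog p = -p * log p := rfl
  rw [hscale, e]
  have : p⁻¹ * (x - p) ^ 2 = p⁻¹ * x ^ 2 - 2 * x + p := by field_simp; ring
  linarith

lemma abs_bootIter_one_negMulLog_le (hn : n ≠ 0) (hp : p ∈ Set.Icc (0 : ℝ) 1) :
    |bootIter n negMulLog 1 p| ≤ 1 / n := by
  rcases hp.1.eq_or_lt with rfl | hp0
  · rw [bootIter_apply_zero negMulLog_zero, abs_zero]
    positivity
  rw [abs_of_nonneg (bootIter_one_nonneg_of_le_tangent hn hp
    fun x hx => negMulLog_le_add_mul_sub hp0 hx.1)]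
  calc bootIter n negMulLog 1 p
      ≤ p⁻¹ * (p * (1 - p) / n) := bootIter_one_le_of_quadratic_le hn hp
        fun x hx => add_mul_sub_sub_le_negMulLog hp0 hx.1
    _ = (1 - p) / n := by field_simp
    _ ≤ 1 / n := by gcongr; linarith [hp.1]

lemma negMulLog_natCast_div_le (n k : ℕ) : negMulLog (k / n) ≤ log n * (k / n) := by
  rw [div_eq_mul_inv, negMulLog_mul, negMulLog, negMulLog, log_inv]
  have : 0 ≤ (n : ℝ)⁻¹ * (k * log k) := by positivity
  nlinarith

lemma negMulLog_div_le_bootIter_one {γ : ℝ} (hn : n ≠ 0) (hγ0 : 0 ≤ γ) (hγ1 : γ ≤ 1) :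
    negMulLog γ / n ≤ bootIter n negMulLog 1 (γ / n) := by
  have h := sub_mul_le_bootIter_one (L := log n) hn (div_natCast_mem_Icc hn hγ0 hγ1)
    fun k _ => negMulLog_natCast_div_le n k
  have e : negMulLog (n : ℝ)⁻¹ = (n : ℝ)⁻¹ * log n := by simp [negMulLog, log_inv]
  rw [div_eq_mul_inv γ, negMulLog_mul, e] at h
  rw [div_eq_mul_inv γ]
  exact le_of_eq_of_le (by ring) h

theorem sSup_abs_bootIter_negMulLog_bounds (m : ℕ) :
    ∃ c₁ > 0, ∃ c₂ > 0, ∃ N : ℕ, ∀ n ≥ N,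
      c₁ / n ≤ sSup ((fun p => |bootIter n (fun q => -(q * Real.log q)) (m + 1) p|) ''
          Set.Icc (0:ℝ) 1) ∧
      sSup ((fun p => |bootIter n (fun q => -(q * Real.log q)) (m + 1) p|) '' Set.Icc (0:ℝ) 1) ≤
        c₂ / n := by
  rw [← negMulLog_eq_neg]
  set γ := exp (-2 ^ m)
  have hγ0 : 0 ≤ γ := (exp_pos _).le
  have hγ1 : γ ≤ 1 := exp_le_one_iff.mpr (by simp)
  have hγ : negMulLog γ = γ * 2 ^ m := by simp [γ, negMulLog, log_exp]
  refine ⟨γ, exp_pos _, 2 ^ m, by positivity, 1, fun n hn => ?_⟩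
  have hn0 : n ≠ 0 := Nat.one_le_iff_ne_zero.mp hn
  obtain ⟨hlow, hup⟩ := sSup_abs_bootIter_succ_bounds hn0 negMulLog_zero
    (fun p hp => abs_bootIter_one_negMulLog_le hn0 hp) hγ0 hγ1 m
  have h := negMulLog_div_le_bootIter_one hn0 hγ0 hγ1
  refine ⟨le_trans (le_of_eq_of_le ?_ (sub_le_sub_right h _)) hlow, hup.trans_eq (by ring)⟩
  rw [hγ]
  ring

end NegMulLog

section Rpow

variable {n : ℕ} {α p x : ℝ}

lemma one_add_mul_sub_sub_le_rpow {t : ℝ} (hα0 : 0 ≤ α) (hα1 : α ≤ 1) (ht : 0 ≤ t) :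
    1 + α * (t - 1) - 4 * (t - 1) ^ 2 ≤ t ^ α := by
  rcases le_or_gt t (1 / 2) with ht2 | ht2
  · nlinarith [rpow_nonneg ht α]
  · have ht0 : 0 < t := by linarith
    have hexp : 1 + α * log t ≤ t ^ α := by
      rw [rpow_def_of_pos ht0]
      linarith [add_one_le_exp (log t * α)]
    -- `0 ≤ t - 1 - log t ≤ t - 2 + t⁻¹ = (t - 1)² / t ≤ 2 (t - 1)²` for `t > 1/2`
    have hlog : 1 - t⁻¹ ≤ log t := one_sub_inv_le_log_of_pos ht0
    have hquad : t - 2 + t⁻¹ ≤ 2 * (t - 1) ^ 2 := by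
      have e : t - 2 + t⁻¹ = (t - 1) ^ 2 * t⁻¹ := by field_simp; ring
      have hinv : t⁻¹ ≤ 2 := (inv_le_comm₀ ht0 two_pos).mpr (by linarith)
      rw [e]
      nlinarith [sq_nonneg (t - 1)]
    nlinarith [log_le_sub_one_of_pos ht0]

lemma rpow_eq_rpow_mul_rpow_div (hp : 0 < p) (hx : 0 ≤ x) : x ^ α = p ^ α * (x / p) ^ α := by
  rw [← mul_rpow hp.le (div_nonneg hx hp.le), mul_div_cancel₀ _ hp.ne']

lemma rpow_le_add_mul_sub (hα0 : 0 ≤ α) (hα1 : α ≤ 1) (hp : 0 < p) (hx : 0 ≤ x) :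
    x ^ α ≤ p ^ α + α * p ^ α / p * (x - p) := by
  have h := rpow_one_add_le_one_add_mul_self (s := x / p - 1)
    (by linarith [div_nonneg hx hp.le]) hα0 hα1
  rw [add_sub_cancel] at h
  rw [rpow_eq_rpow_mul_rpow_div hp hx]
  calc p ^ α * (x / p) ^ α ≤ p ^ α * (1 + α * (x / p - 1)) := by gcongr
    _ = p ^ α + α * p ^ α / p * (x - p) := by field_simp

lemma add_mul_sub_sub_le_rpow (hα0 : 0 ≤ α) (hα1 : α ≤ 1) (hp : 0 < p) (hx : 0 ≤ x) :
    p ^ α + α * p ^ α / p * (x - p) - 4 * p ^ α / p ^ 2 * (x - p) ^ 2 ≤ x ^ α := by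
  rw [rpow_eq_rpow_mul_rpow_div hp hx]
  calc p ^ α + α * p ^ α / p * (x - p) - 4 * p ^ α / p ^ 2 * (x - p) ^ 2
      = p ^ α * (1 + α * (x / p - 1) - 4 * (x / p - 1) ^ 2) := by field_simp
    _ ≤ p ^ α * (x / p) ^ α := by
      gcongr
      exact one_add_mul_sub_sub_le_rpow hα0 hα1 (div_nonneg hx hp.le)

lemma abs_bootIter_one_rpow_le (hα0 : 0 < α) (hα1 : α ≤ 1) (hn : n ≠ 0)
    (hp : p ∈ Set.Icc (0 : ℝ) 1) : |bootIter n (fun q => q ^ α) 1 p| ≤ 4 / n ^ α := by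
  have hn0 : (0 : ℝ) < n := Nat.cast_pos.mpr (Nat.pos_of_ne_zero hn)
  rcases hp.1.eq_or_lt with rfl | hp0
  · rw [bootIter_apply_zero (by simp [zero_rpow hα0.ne']), abs_zero]
    positivity
  rw [abs_of_nonneg (bootIter_one_nonneg_of_le_tangent hn hp
    fun x hx => rpow_le_add_mul_sub hα0.le hα1 hp0 hx.1)]
  rcases le_or_gt p (1 / n) with hpn | hpn
  · have hB : 0 ≤ bernstein' n (fun q => q ^ α) p := by
      simpa only [bernstein'_const] using
        bernstein'_mono (g := fun _ => 0) hp fun k _ => rpow_nonneg (by positivity) α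
    calc bootIter n (fun q => q ^ α) 1 p ≤ p ^ α := sub_le_self _ hB
      _ ≤ (1 / n) ^ α := by gcongr
      _ ≤ 4 / n ^ α := by
        rw [div_rpow zero_le_one hn0.le, one_rpow]
        gcongr
        norm_num
  · have hpn1 : 1 ≤ p * n := by
      rw [div_lt_iff₀ hn0] at hpn
      exact hpn.le
    have hself : (p * n) ^ α ≤ p * n := rpow_le_self_of_one_le hpn1 hα1
    rw [mul_rpow hp0.le hn0.le] at hself
    calc bootIter n (fun q => q ^ α) 1 p
        ≤ 4 * p ^ α / p ^ 2 * (p * (1 - p) / n) := bootIter_one_le_of_quadratic_le hn hp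
          fun x hx => add_mul_sub_sub_le_rpow hα0.le hα1 hp0 hx.1
      _ ≤ 4 * p ^ α / p ^ 2 * (p * 1 / n) := by gcongr; linarith [hp.1]
      _ = 4 * (p ^ α * n ^ α) / (p * n) / n ^ α := by field_simp
      _ ≤ 4 * (p * n) / (p * n) / n ^ α := by gcongr
      _ = 4 / n ^ α := by field_simp

lemma natCast_div_rpow_le (hα0 : 0 < α) (hα1 : α ≤ 1) (n k : ℕ) :
    ((k : ℝ) / n) ^ α ≤ n / n ^ α * (k / n) := by
  rcases Nat.eq_zero_or_pos k with rfl | hk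
  · simp [zero_rpow hα0.ne']
  rcases Nat.eq_zero_or_pos n with rfl | hn
  · simp [zero_rpow hα0.ne']
  calc ((k : ℝ) / n) ^ α = k ^ α / n ^ α := div_rpow k.cast_nonneg n.cast_nonneg α
    _ ≤ k / n ^ α := by gcongr; exact rpow_le_self_of_one_le (Nat.one_le_cast.mpr hk) hα1
    _ = n / n ^ α * (k / n) := by field_simp

lemma rpow_sub_div_le_bootIter_one {γ : ℝ} (hα0 : 0 < α) (hα1 : α ≤ 1) (hn : n ≠ 0)
    (hγ0 : 0 ≤ γ) (hγ1 : γ ≤ 1) :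
    (γ ^ α - γ) / n ^ α ≤ bootIter n (fun q => q ^ α) 1 (γ / n) := by
  have hn0 : (0 : ℝ) < n := Nat.cast_pos.mpr (Nat.pos_of_ne_zero hn)
  have h := sub_mul_le_bootIter_one (f := fun q => q ^ α) hn (div_natCast_mem_Icc hn hγ0 hγ1)
    fun k _ => natCast_div_rpow_le hα0 hα1 n k
  rw [div_rpow hγ0 hn0.le] at h
  exact le_of_eq_of_le (by field_simp) h

lemma exists_rpow_eq_mul_self {c : ℝ} (hα : α < 1) (hc : 1 ≤ c) :
    ∃ γ : ℝ, 0 < γ ∧ γ ≤ 1 ∧ γ ^ α = c * γ := by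
  have hc0 : 0 < c := by linarith
  have hα' : α - 1 ≠ 0 := by linarith
  refine ⟨c ^ (α - 1)⁻¹, rpow_pos_of_pos hc0 _,
    rpow_le_one_of_one_le_of_nonpos hc (inv_nonpos.mpr (by linarith)), ?_⟩
  rw [← rpow_mul hc0.le, mul_comm c, ← rpow_add_one hc0.ne']
  congr 1
  field_simp
  ring

theorem sSup_abs_bootIter_rpow_bounds (m : ℕ) (hα0 : 0 < α) (hα1 : α < 1) :
    ∃ c₁ > 0, ∃ c₂ > 0, ∃ N : ℕ, ∀ n ≥ N,
      c₁ * (n : ℝ) ^ (-α) ≤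
        sSup ((fun p => |bootIter n (fun q => q ^ α) (m + 1) p|) '' Set.Icc (0:ℝ) 1) ∧
      sSup ((fun p => |bootIter n (fun q => q ^ α) (m + 1) p|) '' Set.Icc (0:ℝ) 1) ≤
        c₂ * (n : ℝ) ^ (-α) := by
  obtain ⟨γ, hγ0, hγ1, hγ⟩ :=
    exists_rpow_eq_mul_self hα1 (one_le_pow₀ (M₀ := ℝ) one_le_two (n := m + 2))
  refine ⟨3 * γ, by positivity, 2 ^ m * 4, by positivity, 1, fun n hn => ?_⟩
  have hn0 : n ≠ 0 := Nat.one_le_iff_ne_zero.mp hn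
  obtain ⟨hlow, hup⟩ := sSup_abs_bootIter_succ_bounds hn0 (by simp [zero_rpow hα0.ne'])
    (fun p hp => abs_bootIter_one_rpow_le hα0 hα1.le hn0 hp) hγ0.le hγ1 m
  have h := rpow_sub_div_le_bootIter_one hα0 hα1.le hn0 hγ0.le hγ1
  rw [rpow_neg n.cast_nonneg, ← div_eq_mul_inv, ← div_eq_mul_inv]
  refine ⟨le_trans (le_of_eq_of_le ?_ (sub_le_sub_right h _)) hlow, hup.trans_eq (by ring)⟩
  rw [hγ]
  ring

end Rpow

/-- for `f(p) = −p ln p` the bootstrap bias `(I−B_n)^m f` has sup-norm `≍ 1/n`,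
and for `f(p) = p^α` (`0<α<1`) it is `≍ n^{−α}`: the first `m−1` bootstrap bias-correction
rounds do not change the order of the bias for these functions. -/
theorem bootstrap_bias_entropy_power (m : ℕ) (hm : 1 ≤ m) :
    (∃ c₁ > 0, ∃ c₂ > 0, ∃ N : ℕ, ∀ n ≥ N,
      c₁ / n ≤ sSup ((fun p => |bootIter n (fun q => -(q * Real.log q)) m p|) ''
          Set.Icc (0:ℝ) 1) ∧
      sSup ((fun p => |bootIter n (fun q => -(q * Real.log q)) m p|) '' Set.Icc (0:ℝ) 1) ≤
        c₂ / n) ∧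
    (∀ α : ℝ, 0 < α → α < 1 → ∃ c₁ > 0, ∃ c₂ > 0, ∃ N : ℕ, ∀ n ≥ N,
      c₁ * (n : ℝ) ^ (-α) ≤
        sSup ((fun p => |bootIter n (fun q => q ^ α) m p|) '' Set.Icc (0:ℝ) 1) ∧
      sSup ((fun p => |bootIter n (fun q => q ^ α) m p|) '' Set.Icc (0:ℝ) 1) ≤
        c₂ * (n : ℝ) ^ (-α)) := by
  obtain ⟨m, rfl⟩ := Nat.exists_eq_add_of_le' hm
  exact ⟨sSup_abs_bootIter_negMulLog_bounds m,
    fun _ hα0 hα1 => sSup_abs_bootIter_rpow_bounds m hα0 hα1⟩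
end

section
/- Let X be a nonnegative random variable on a probability space with E[X²] < ∞ and E[X ln X] < ∞ (with the convention 0 ln 0 = 0), and assume E[X] > 0. Define Ent(X) = E[X ln X] − E[X] ln E[X]. Then Ent(X) ≤ E[X] · ln( 1 + Var(X)/(E[X])² ) ≤ √(Var(X)). -/
/-!
Since `log` is concave, `log x ≤ log c + x / c - 1` for every `c > 0`; multiplying by `x ≥ 0`
and integrating gives `E[X ln X] ≤ E[X] ln c + E[X²] / c - E[X]`. The choice `c = E[X²] / E[X]`
makes the last two terms cancel, and `ln c - ln E[X] = ln (E[X²] / E[X]²) = ln (1 + Var X / E[X]²)`.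
The second inequality is `ln (1 + t²) ≤ t` for `t = √Var X / E[X]`, i.e. `1 + t² ≤ exp t`.
-/

open MeasureTheory ProbabilityTheory

namespace Real

lemma mul_log_le_mul_log_add_sq_div_sub {x c : ℝ} (hx : 0 ≤ x) (hc : 0 < c) :
    x * log x ≤ x * log c + x ^ 2 / c - x := by
  rcases hx.eq_or_lt with rfl | hx
  · simp
  have hlog : log x - log c ≤ x / c - 1 := by
    rw [← log_div hx.ne' hc.ne']
    exact log_le_sub_one_of_pos (div_pos hx hc)
  have hmul := mul_le_mul_of_nonneg_left hlog hx.le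
  have hsq : x * (x / c) = x ^ 2 / c := by ring
  rw [mul_sub, mul_sub, mul_one, hsq] at hmul
  linarith

lemma log_one_add_sq_le {s : ℝ} (hs : 0 ≤ s) : log (1 + s ^ 2) ≤ s := by
  rw [log_le_iff_le_exp (by positivity)]
  have hexp := sum_le_exp_of_nonneg hs 4
  simp only [Finset.sum_range_succ, Finset.sum_range_zero, Nat.factorial] at hexp
  norm_num at hexp
  nlinarith [sq_nonneg (2 * s - 3), pow_nonneg hs 3]

lemma mul_log_one_add_div_sq_le_sqrt {m v : ℝ} (hm : 0 < m) (hv : 0 ≤ v) :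
    m * log (1 + v / m ^ 2) ≤ √v := by
  have hsqrt : √(v / m ^ 2) = √v / m := by rw [sqrt_div hv, sqrt_sq hm.le]
  calc m * log (1 + v / m ^ 2) = m * log (1 + √(v / m ^ 2) ^ 2) := by
        rw [sq_sqrt (by positivity)]
    _ ≤ m * √(v / m ^ 2) := mul_le_mul_of_nonneg_left (log_one_add_sq_le (sqrt_nonneg _)) hm.le
    _ = √v := by rw [hsqrt]; field_simp

end Real

section

variable {Ω : Type*} [MeasurableSpace Ω] {μ : Measure Ω} {X : Ω → ℝ}

lemma sq_integral_le_integral_sq [IsProbabilityMeasure μ] (hX1 : Integrable X μ)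
    (hX2 : Integrable (fun ω => X ω ^ 2) μ) :
    (∫ ω, X ω ∂μ) ^ 2 ≤ ∫ ω, X ω ^ 2 ∂μ := by
  have hmem : MemLp X 2 μ := (memLp_two_iff_integrable_sq hX1.aestronglyMeasurable).2 hX2
  have hvar := variance_nonneg X μ
  rw [variance_eq_sub hmem] at hvar
  simp only [Pi.pow_apply] at hvar
  linarith

lemma integral_mul_log_le (hX0 : ∀ ω, 0 ≤ X ω) (hX1 : Integrable X μ)
    (hX2 : Integrable (fun ω => X ω ^ 2) μ) (hXlog : Integrable (fun ω => X ω * Real.log (X ω)) μ)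
    {c : ℝ} (hc : 0 < c) :
    ∫ ω, X ω * Real.log (X ω) ∂μ ≤
      (∫ ω, X ω ∂μ) * Real.log c + (∫ ω, X ω ^ 2 ∂μ) / c - ∫ ω, X ω ∂μ := by
  have hlin : Integrable (fun ω => X ω * Real.log c) μ := hX1.mul_const _
  have hquad : Integrable (fun ω => X ω ^ 2 / c) μ := hX2.div_const _
  have hsum : Integrable (fun ω => X ω * Real.log c + X ω ^ 2 / c) μ := hlin.add hquad
  calc ∫ ω, X ω * Real.log (X ω) ∂μ
      ≤ ∫ ω, (X ω * Real.log c + X ω ^ 2 / c - X ω) ∂μ :=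
        integral_mono hXlog (hsum.sub hX1)
          fun ω => Real.mul_log_le_mul_log_add_sq_div_sub (hX0 ω) hc
    _ = _ := by
        rw [integral_sub hsum hX1, integral_add hlin hquad, integral_mul_const,
          integral_div]

end

/-- upper bound on the entropy functional:
`Ent(X) ≤ E[X]·ln(1 + Var(X)/(E[X])²) ≤ √Var(X)` for a nonnegative random variable `X`
with finite second moment and finite `E[X ln X]` (convention `0 ln 0 = 0`), `E[X] > 0`. -/
theorem ent_upper_bound {Ω : Type*} [MeasurableSpace Ω] (μ : Measure Ω)
    [IsProbabilityMeasure μ] (X : Ω → ℝ)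
    (hX0 : ∀ ω, 0 ≤ X ω)
    (hX1 : Integrable X μ)
    (hX2 : Integrable (fun ω => (X ω) ^ 2) μ)
    (hXlog : Integrable (fun ω => X ω * Real.log (X ω)) μ)
    (hEX : 0 < ∫ ω, X ω ∂μ) :
    (∫ ω, X ω * Real.log (X ω) ∂μ) - (∫ ω, X ω ∂μ) * Real.log (∫ ω, X ω ∂μ) ≤
      (∫ ω, X ω ∂μ) *
        Real.log (1 + ((∫ ω, (X ω) ^ 2 ∂μ) - (∫ ω, X ω ∂μ) ^ 2) / (∫ ω, X ω ∂μ) ^ 2) ∧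
    (∫ ω, X ω ∂μ) *
        Real.log (1 + ((∫ ω, (X ω) ^ 2 ∂μ) - (∫ ω, X ω ∂μ) ^ 2) / (∫ ω, X ω ∂μ) ^ 2) ≤
      Real.sqrt ((∫ ω, (X ω) ^ 2 ∂μ) - (∫ ω, X ω ∂μ) ^ 2) := by
  set m := ∫ ω, X ω ∂μ
  set S := ∫ ω, X ω ^ 2 ∂μ
  have hvar : m ^ 2 ≤ S := sq_integral_le_integral_sq hX1 hX2
  have hS : 0 < S := (pow_pos hEX 2).trans_le hvar
  have hent := integral_mul_log_le hX0 hX1 hX2 hXlog (div_pos hS hEX)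
  have hcancel : S / (S / m) = m := by field_simp
  have hlog : Real.log (S / m) - Real.log m = Real.log (1 + (S - m ^ 2) / m ^ 2) := by
    rw [← Real.log_div (div_pos hS hEX).ne' hEX.ne']
    congr 1
    field_simp
    ring
  refine ⟨?_, Real.mul_log_one_add_div_sq_le_sqrt hEX (by linarith)⟩
  rw [← hlog, mul_sub]
  linarith
end

section
/- Let X be a nonnegative integrable random variable on a probability space with E[X ln X] < ∞ (with the convention 0 ln 0 = 0), and assume E[X] > 0. Define Ent(X) = E[X ln X] − E[X] ln E[X]. Then: (i) Ent(X) ≥ 2 ( E[X] − √(E[X]) · E[√X] ) ≥ Var(√X) = E[X] − (E[√X])²; and (ii) Ent(X) ≥ (1/2) · E[X] · ( E| X/E[X] − 1 | )². -/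
/-!
With `u = X / E[X]` one has `Ent(X) = E[X] · E[klFun u]`, where `klFun u = u log u + 1 - u ≥ 0`.
Part (i) integrates `log t ≥ 1 - 1/t` at `t = √u`, and the variance bound is
`(√E[X] - E[√X])² ≥ 0`. Part (ii) integrates the Pinsker-type bound
`3 (u - 1)² ≤ (2u + 4) klFun u` in its AM-GM form `|u - 1| ≤ l (u + 2) / 3 + klFun u / (2l)`
and takes `l = E|u - 1| / 2`.
-/

open MeasureTheory Real InformationTheory Set

namespace Real

lemma two_mul_sub_one_div_add_one_le_log {x : ℝ} (hx : 1 ≤ x) : 2 * (x - 1) / (x + 1) ≤ log x := by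
  have := le_log_one_add_of_nonneg (sub_nonneg.2 hx)
  rwa [add_sub_cancel, show x - 1 + 2 = x + 1 by ring] at this

lemma log_le_two_mul_sub_one_div_add_one {x : ℝ} (hx₀ : 0 < x) (hx₁ : x ≤ 1) :
    log x ≤ 2 * (x - 1) / (x + 1) := by
  have := two_mul_sub_one_div_add_one_le_log (one_le_inv₀ hx₀ |>.2 hx₁)
  rw [log_inv,
    show 2 * (x⁻¹ - 1) / (x⁻¹ + 1) = -(2 * (x - 1) / (x + 1)) by field_simp; ring] at this
  linarith

lemma two_mul_sub_sqrt_mul_sqrt_le {x m : ℝ} (hx : 0 ≤ x) (hm : 0 < m) :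
    2 * (x - √m * √x) ≤ x * log x - x * log m := by
  rcases hx.eq_or_lt with rfl | hx
  · simp
  have hs : 0 < √x := sqrt_pos.2 hx
  have ht : 0 < √m := sqrt_pos.2 hm
  -- `log t ≥ 1 - 1/t` at `t = √(x/m)`
  have key := one_sub_inv_le_log_of_pos (div_pos hs ht)
  rw [log_div hs.ne' ht.ne', log_sqrt hx.le, log_sqrt hm.le, inv_div] at key
  calc 2 * (x - √m * √x)
      = 2 * x * (1 - √m / √x) := by field_simp; linear_combination -√m * mul_self_sqrt hx.le
    _ ≤ 2 * x * (log x / 2 - log m / 2) := by gcongr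
    _ = x * log x - x * log m := by ring

lemma sub_sq_le_two_mul_sub_sqrt_mul {m : ℝ} (hm : 0 ≤ m) (s : ℝ) :
    m - s ^ 2 ≤ 2 * (m - √m * s) := by
  nlinarith [sq_nonneg (√m - s), sq_sqrt hm]

end Real

namespace InformationTheory

lemma klFun_div (x : ℝ) {m : ℝ} (hm : m ≠ 0) :
    klFun (x / m) = (x * log x - x * log m) / m + 1 - x / m := by
  rcases eq_or_ne x 0 with rfl | hx
  · simp [klFun_zero]
  rw [klFun_apply, log_div hx hm]
  ring

lemma hasDerivAt_mul_klFun_sub_sq {x : ℝ} (hx : x ≠ 0) :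
    HasDerivAt (fun y ↦ (2 * y + 4) * klFun y - 3 * (y - 1) ^ 2)
      (4 * (x + 1) * log x - 8 * (x - 1)) x := by
  have h : HasDerivAt (fun y ↦ (2 * y + 4) * klFun y - 3 * (y - 1) ^ 2) _ x :=
    (((hasDerivAt_id x).const_mul 2).add_const 4).mul (hasDerivAt_klFun hx)
      |>.sub ((((hasDerivAt_id x).sub_const 1).pow 2).const_mul 3)
  convert h using 1
  simp only [klFun_apply, id]
  ring

lemma sq_sub_one_le_mul_klFun {x : ℝ} (hx : 0 ≤ x) : 3 * (x - 1) ^ 2 ≤ (2 * x + 4) * klFun x := by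
  set g : ℝ → ℝ := fun y ↦ (2 * y + 4) * klFun y - 3 * (y - 1) ^ 2
  have hg : Continuous g := by have := continuous_klFun; fun_prop
  have hg1 : g 1 = 0 := by simp [g, klFun_one]
  have hg' (s : Set ℝ) (y : ℝ) (hy : 0 < y) :
      HasDerivWithinAt g (4 * (y + 1) * log y - 8 * (y - 1)) s y :=
    (hasDerivAt_mul_klFun_sub_sq hy.ne').hasDerivWithinAt
  suffices 0 ≤ g x by simp only [g] at this; linarith
  rcases le_total 1 x with h1 | h1
  · have hmono : MonotoneOn g (Ici 1) := by
      refine monotoneOn_of_hasDerivWithinAt_nonneg (convex_Ici 1) hg.continuousOn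
        (fun y hy ↦ hg' _ y ?_) fun y hy ↦ ?_
      · rw [interior_Ici] at hy; exact zero_lt_one.trans hy
      · rw [interior_Ici] at hy
        have := two_mul_sub_one_div_add_one_le_log (le_of_lt hy)
        rw [div_le_iff₀ (by linarith [mem_Ioi.1 hy])] at this
        linarith
    simpa [hg1] using hmono self_mem_Ici h1 h1
  · have hanti : AntitoneOn g (Icc 0 1) := by
      refine antitoneOn_of_hasDerivWithinAt_nonpos (convex_Icc 0 1) hg.continuousOn
        (fun y hy ↦ hg' _ y ?_) fun y hy ↦ ?_
      · rw [interior_Icc] at hy; exact hy.1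
      · rw [interior_Icc] at hy
        have := log_le_two_mul_sub_one_div_add_one hy.1 hy.2.le
        rw [le_div_iff₀ (by linarith [hy.1])] at this
        linarith
    simpa [hg1] using hanti ⟨hx, h1⟩ ⟨zero_le_one, le_rfl⟩ h1

lemma abs_sub_one_le_add_klFun_div {x : ℝ} (hx : 0 ≤ x) {l : ℝ} (hl : 0 < l) :
    |x - 1| ≤ l * (x + 2) / 3 + klFun x / (2 * l) := by
  have key := sq_sub_one_le_mul_klFun hx
  have hk := klFun_nonneg hx
  rw [div_add_div _ _ (by norm_num) (by positivity), le_div_iff₀ (by positivity)]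
  nlinarith [sq_nonneg (2 * l * (x + 2) - 3 * |x - 1|), sq_abs (x - 1), mul_pos hl hl]

end InformationTheory

section Entropy

variable {Ω : Type*} [MeasurableSpace Ω] {μ : Measure Ω} {X : Ω → ℝ}

lemma MeasureTheory.Integrable.sqrt [IsFiniteMeasure μ] (hX : Integrable X μ) (hX0 : ∀ ω, 0 ≤ X ω) :
    Integrable (fun ω ↦ √(X ω)) μ := by
  refine MemLp.integrable one_le_two ?_
  rw [memLp_two_iff_integrable_sq (continuous_sqrt.comp_aestronglyMeasurable hX.1)]
  simpa only [sq_sqrt (hX0 _)] using hX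

lemma two_mul_sub_sqrt_mul_integral_sqrt_le [IsFiniteMeasure μ] (hX0 : ∀ ω, 0 ≤ X ω)
    (hX : Integrable X μ) (hXlog : Integrable (fun ω ↦ X ω * log (X ω)) μ)
    (hm : 0 < ∫ ω, X ω ∂μ) :
    2 * ((∫ ω, X ω ∂μ) - √(∫ ω, X ω ∂μ) * ∫ ω, √(X ω) ∂μ) ≤
      (∫ ω, X ω * log (X ω) ∂μ) - (∫ ω, X ω ∂μ) * log (∫ ω, X ω ∂μ) := by
  set m := ∫ ω, X ω ∂μ
  have hsqrt := (hX.sqrt hX0).const_mul √m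
  have hlhs : Integrable (fun ω ↦ 2 * (X ω - √m * √(X ω))) μ := (hX.sub hsqrt).const_mul 2
  have hrhs : Integrable (fun ω ↦ X ω * log (X ω) - X ω * log m) μ :=
    hXlog.sub (hX.mul_const _)
  have h := integral_mono hlhs hrhs fun ω ↦ two_mul_sub_sqrt_mul_sqrt_le (hX0 ω) hm
  rwa [integral_const_mul, integral_sub hX hsqrt, integral_const_mul,
    integral_sub hXlog (hX.mul_const _), integral_mul_const] at h

lemma integrable_klFun_div [IsFiniteMeasure μ] (hX : Integrable X μ)
    (hXlog : Integrable (fun ω ↦ X ω * log (X ω)) μ) {c : ℝ} (hc : c ≠ 0) :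
    Integrable (fun ω ↦ klFun (X ω / c)) μ := by
  simp_rw [klFun_div _ hc]
  exact (((hXlog.sub (hX.mul_const _)).div_const c).add (integrable_const 1)).sub
    (hX.div_const c)

lemma integral_klFun_div_integral [IsProbabilityMeasure μ] (hX : Integrable X μ)
    (hXlog : Integrable (fun ω ↦ X ω * log (X ω)) μ) (hm : ∫ ω, X ω ∂μ ≠ 0) :
    ∫ ω, klFun (X ω / ∫ ω', X ω' ∂μ) ∂μ =
      ((∫ ω, X ω * log (X ω) ∂μ) - (∫ ω, X ω ∂μ) * log (∫ ω, X ω ∂μ)) / ∫ ω, X ω ∂μ := by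
  set m := ∫ ω, X ω ∂μ
  have hent : Integrable (fun ω ↦ (X ω * log (X ω) - X ω * log m) / m) μ :=
    (hXlog.sub (hX.mul_const _)).div_const _
  have hent1 : Integrable (fun ω ↦ (X ω * log (X ω) - X ω * log m) / m + 1) μ :=
    hent.add (integrable_const 1)
  simp_rw [klFun_div _ hm]
  rw [integral_sub hent1 (hX.div_const _), integral_add hent (integrable_const 1), integral_div,
    integral_sub hXlog (hX.mul_const _), integral_mul_const, integral_div, integral_const]
  simp only [probReal_univ, one_smul]
  rw [show ∫ ω, X ω ∂μ = m from rfl, div_self hm]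
  ring

lemma sq_integral_abs_div_sub_one_le [IsProbabilityMeasure μ] (hX0 : ∀ ω, 0 ≤ X ω)
    (hX : Integrable X μ) (hXlog : Integrable (fun ω ↦ X ω * log (X ω)) μ)
    (hm : 0 < ∫ ω, X ω ∂μ) :
    (∫ ω, |X ω / (∫ ω', X ω' ∂μ) - 1| ∂μ) ^ 2 ≤ 2 * ∫ ω, klFun (X ω / ∫ ω', X ω' ∂μ) ∂μ := by
  set m := ∫ ω, X ω ∂μ
  set a := ∫ ω, |X ω / m - 1| ∂μ
  set K := ∫ ω, klFun (X ω / m) ∂μ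
  have hu (ω : Ω) : 0 ≤ X ω / m := div_nonneg (hX0 ω) hm.le
  have hK : 0 ≤ K := integral_nonneg fun ω ↦ klFun_nonneg (hu ω)
  rcases eq_or_lt_of_le (show 0 ≤ a from integral_nonneg fun ω ↦ abs_nonneg _) with ha | ha
  · rw [← ha]; linarith
  have hl : 0 < a / 2 := half_pos ha
  have hlin : Integrable (fun ω ↦ a / 2 * (X ω / m + 2) / 3) μ :=
    (((hX.div_const m).add (integrable_const 2)).const_mul _).div_const 3
  have hkl : Integrable (fun ω ↦ klFun (X ω / m) / (2 * (a / 2))) μ :=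
    (integrable_klFun_div hX hXlog hm.ne').div_const _
  have habs : Integrable (fun ω ↦ |X ω / m - 1|) μ :=
    ((hX.div_const m).sub (integrable_const 1)).abs
  have hsum : Integrable (fun ω ↦ a / 2 * (X ω / m + 2) / 3 + klFun (X ω / m) / (2 * (a / 2))) μ :=
    hlin.add hkl
  have h := integral_mono habs hsum fun ω ↦ abs_sub_one_le_add_klFun_div (hu ω) hl
  rw [integral_add hlin hkl, integral_div, integral_const_mul,
    integral_add (hX.div_const m) (integrable_const 2), integral_div, integral_const, integral_div,
    div_self hm.ne'] at h
  simp only [probReal_univ, one_smul] at h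
  change a ≤ a / 2 * (1 + 2) / 3 + K / (2 * (a / 2)) at h
  field_simp at h
  nlinarith

end Entropy

/-- lower bounds on the entropy functional for a nonnegative integrable
random variable `X` with `E[X ln X]` finite (convention `0 ln 0 = 0`) and `E[X] > 0`:
(i) `Ent(X) ≥ 2(E[X] − √(E[X])·E[√X]) ≥ Var(√X) = E[X] − (E[√X])²`;
(ii) `Ent(X) ≥ (1/2)·E[X]·(E|X/E[X] − 1|)²`. -/
theorem ent_lower_bounds {Ω : Type*} [MeasurableSpace Ω] (μ : Measure Ω)
    [IsProbabilityMeasure μ] (X : Ω → ℝ)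
    (hX0 : ∀ ω, 0 ≤ X ω)
    (hX1 : Integrable X μ)
    (hXlog : Integrable (fun ω => X ω * Real.log (X ω)) μ)
    (hEX : 0 < ∫ ω, X ω ∂μ) :
    (2 * ((∫ ω, X ω ∂μ) - Real.sqrt (∫ ω, X ω ∂μ) * ∫ ω, Real.sqrt (X ω) ∂μ) ≤
        (∫ ω, X ω * Real.log (X ω) ∂μ) - (∫ ω, X ω ∂μ) * Real.log (∫ ω, X ω ∂μ) ∧
      (∫ ω, X ω ∂μ) - (∫ ω, Real.sqrt (X ω) ∂μ) ^ 2 ≤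
        2 * ((∫ ω, X ω ∂μ) - Real.sqrt (∫ ω, X ω ∂μ) * ∫ ω, Real.sqrt (X ω) ∂μ)) ∧
    (1 / 2) * (∫ ω, X ω ∂μ) * (∫ ω, |X ω / (∫ ω', X ω' ∂μ) - 1| ∂μ) ^ 2 ≤
      (∫ ω, X ω * Real.log (X ω) ∂μ) - (∫ ω, X ω ∂μ) * Real.log (∫ ω, X ω ∂μ) := by
  refine ⟨⟨two_mul_sub_sqrt_mul_integral_sqrt_le hX0 hX1 hXlog hEX,
    sub_sq_le_two_mul_sub_sqrt_mul hEX.le _⟩, ?_⟩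
  have h := sq_integral_abs_div_sub_one_le hX0 hX1 hXlog hEX
  rw [integral_klFun_div_integral hX1 hXlog hEX.ne'] at h
  calc _ ≤ 1 / 2 * (∫ ω, X ω ∂μ) * (2 * (_ / ∫ ω, X ω ∂μ)) := by gcongr
    _ = _ := by field_simp
end

section
/- Let r ≥ 1 be an integer, let x_0 < x_1 < … < x_r be integers, and let f : ℤ → ℝ be any function. Then the divided difference satisfies |f[x_0, x_1, …, x_r]| ≤ (1/r!) · max { |Δ^r f(x)| : x ∈ ℤ, x_0 ≤ x ≤ x_r }, where Δ^r f(x) = Σ_{k=0}^r (−1)^k (r choose k) f(x − k) is the r-th order backward difference. -/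
/-!
The `r`-th backward difference at `z + r` is the forward difference `Δ^r g z`, whose window
is `[z, z + r]`. For `r + 1` consecutive nodes `m, …, m + r` the divided difference is exactly
`Δ^r g m / r!`. Otherwise pick a gap `y` strictly between the extreme nodes `a < b`; the recurrence
`(a - b) g[s] = g[s \ {b}] - g[s \ {a}]`, applied to `s ∪ {y}` at the pairs `(y, a)` and `(b, y)`,
writes `(b - a) g[s]` as `(b - y) g[s ∪ {y} \ {a}] + (y - a) g[s ∪ {y} \ {b}]`, a positive
combination of divided differences over nodes in a shorter interval. Induction on the length of
the interval shows that a lower bound `c ≤ Δ^r g` on all windows gives `c / r! ≤ g[s]`; applying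
this to `g` and `-g` gives the theorem.
-/

open Finset fwdDiff Nat

theorem fwdDiff_iter_eq_sum_sub {R : Type*} [CommRing R] (f : ℤ → R) (r : ℕ) (z : ℤ) :
    Δ_[1] ^[r] f z = ∑ k ∈ range (r + 1), (-1) ^ k * (r.choose k : R) * f (z + r - k) := by
  rw [fwdDiff_iter_eq_sum_shift, ← sum_range_reflect]
  refine sum_congr rfl fun k hk => ?_
  have hkr : k ≤ r := Nat.lt_succ_iff.1 (mem_range.1 hk)
  rw [add_tsub_cancel_right, Nat.sub_sub_self hkr, Nat.choose_symm hkr, zsmul_eq_mul]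
  rw [show z + (r - k) • (1 : ℤ) = z + r - k by rw [nsmul_one]; omega]
  push_cast
  ring

section Field

variable {𝕜 : Type*} [Field 𝕜]

noncomputable def divDiff (s : Finset ℤ) (g : ℤ → 𝕜) : 𝕜 :=
  ∑ a ∈ s, g a / ∏ b ∈ s.erase a, ((a : 𝕜) - b)

theorem divDiff_image {ι : Type*} [DecidableEq ι] {x : ι → ℤ} (hx : Function.Injective x)
    (s : Finset ι) (g : ℤ → 𝕜) :
    divDiff (s.image x) g = ∑ i ∈ s, g (x i) / ∏ j ∈ s.erase i, ((x i : 𝕜) - x j) := by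
  rw [divDiff, sum_image hx.injOn]
  refine sum_congr rfl fun i _ => ?_
  rw [← image_erase hx, prod_image hx.injOn]

theorem divDiff_neg (s : Finset ℤ) (g : ℤ → 𝕜) : divDiff s (-g) = -divDiff s g := by
  simp only [divDiff, Pi.neg_apply, neg_div, sum_neg_distrib]

variable [CharZero 𝕜]

theorem divDiff_erase {s : Finset ℤ} {b : ℤ} (hb : b ∈ s) (g : ℤ → 𝕜) :
    divDiff (s.erase b) g = ∑ a ∈ s, g a * ((a : 𝕜) - b) / ∏ c ∈ s.erase a, ((a : 𝕜) - c) := by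
  rw [← add_sum_erase _ _ hb, sub_self, mul_zero, zero_div, zero_add, divDiff]
  refine sum_congr rfl fun a ha => ?_
  have hab : ((a : 𝕜) - b) ≠ 0 := sub_ne_zero.2 (Int.cast_injective.ne (ne_of_mem_erase ha))
  rw [← mul_prod_erase _ _ (mem_erase.2 ⟨(ne_of_mem_erase ha).symm, hb⟩), erase_right_comm,
    mul_comm (g a), mul_div_mul_left _ _ hab]

theorem sub_mul_divDiff {s : Finset ℤ} {a b : ℤ} (ha : a ∈ s) (hb : b ∈ s) (g : ℤ → 𝕜) :
    ((a : 𝕜) - b) * divDiff s g = divDiff (s.erase b) g - divDiff (s.erase a) g := by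
  rw [divDiff_erase hb, divDiff_erase ha, ← sum_sub_distrib, divDiff, mul_sum]
  refine sum_congr rfl fun c _ => ?_
  ring

theorem divDiff_Icc (m : ℤ) (r : ℕ) (g : ℤ → 𝕜) :
    divDiff (Icc m (m + r)) g = Δ_[1] ^[r] g m / r ! := by
  induction r generalizing m with
  | zero => simp [divDiff]
  | succ r ih =>
    have hrec := sub_mul_divDiff (s := Icc m (m + (r + 1 : ℕ)))
      (a := m + (r + 1 : ℕ)) (b := m) (mem_Icc.2 ⟨by omega, le_rfl⟩) (mem_Icc.2 ⟨le_rfl, by omega⟩)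
      g
    have hleft : (Icc m (m + (r + 1 : ℕ))).erase m = Icc (m + 1) (m + 1 + r) := by
      ext
      simp only [mem_erase, mem_Icc]
      omega
    have hright : (Icc m (m + (r + 1 : ℕ))).erase (m + (r + 1 : ℕ)) = Icc m (m + r) := by
      ext
      simp only [mem_erase, mem_Icc]
      omega
    rw [hleft, hright, ih, ih] at hrec
    rw [Function.iterate_succ_apply', fwdDiff, factorial_succ]
    push_cast at hrec ⊢
    field_simp
    linear_combination hrec

theorem sub_mul_divDiff_eq_add {s : Finset ℤ} {a b y : ℤ} (ha : a ∈ s) (hb : b ∈ s) (hy : y ∉ s)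
    (g : ℤ → 𝕜) :
    ((b : 𝕜) - a) * divDiff s g =
      (b - y) * divDiff ((insert y s).erase a) g + (y - a) * divDiff ((insert y s).erase b) g := by
  have hya := sub_mul_divDiff (mem_insert_self y s) (mem_insert_of_mem ha) g
  have hby := sub_mul_divDiff (mem_insert_of_mem hb) (mem_insert_self y s) g
  rw [erase_insert hy] at hya hby
  linear_combination ((b : 𝕜) - y) * hya - ((y : 𝕜) - a) * hby

end Field

section LinearOrderedField

variable {𝕜 : Type*} [Field 𝕜] [LinearOrder 𝕜] [IsStrictOrderedRing 𝕜]

theorem div_factorial_le_divDiff_Icc {r : ℕ} {g : ℤ → 𝕜} {c : 𝕜} {a b : ℤ}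
    (hcard : #(Icc a b) = r + 1) (hg : ∀ z, a ≤ z → z + r ≤ b → c ≤ Δ_[1] ^[r] g z) :
    c / r ! ≤ divDiff (Icc a b) g := by
  obtain rfl : b = a + r := by rw [Int.card_Icc] at hcard; omega
  rw [divDiff_Icc]
  gcongr
  exact hg a le_rfl le_rfl

theorem le_divDiff_of_le_divDiff_erase_insert {s : Finset ℤ} {a b y : ℤ} (ha : a ∈ s) (hb : b ∈ s)
    (hys : y ∉ s) (hay : a < y) (hyb : y < b) {g : ℤ → 𝕜} {d : 𝕜}
    (hleft : d ≤ divDiff ((insert y s).erase a) g) (hright : d ≤ divDiff ((insert y s).erase b) g) :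
    d ≤ divDiff s g := by
  have hay' : (a : 𝕜) < y := by exact_mod_cast hay
  have hyb' : (y : 𝕜) < b := by exact_mod_cast hyb
  refine le_of_mul_le_mul_left ?_ (sub_pos.2 (hay'.trans hyb'))
  calc ((b : 𝕜) - a) * d = (b - y) * d + (y - a) * d := by ring
    _ ≤ (b - y) * divDiff ((insert y s).erase a) g + (y - a) * divDiff ((insert y s).erase b) g :=
      by gcongr
    _ = (b - a) * divDiff s g := (sub_mul_divDiff_eq_add ha hb hys g).symm

theorem div_factorial_le_divDiff {r : ℕ} {g : ℤ → 𝕜} {c : 𝕜} (n : ℕ) {a : ℤ} {s : Finset ℤ}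
    (hcard : #s = r + 1) (hs : s ⊆ Icc a (a + n))
    (hg : ∀ z, a ≤ z → z + r ≤ a + n → c ≤ Δ_[1] ^[r] g z) : c / r ! ≤ divDiff s g := by
  induction n generalizing a s with
  | zero =>
    obtain rfl := eq_of_subset_of_card_le hs (by simp [hcard])
    exact div_factorial_le_divDiff_Icc hcard hg
  | succ n ih =>
    set b := a + ((n + 1 : ℕ) : ℤ)
    have ih' {a' : ℤ} {t : Finset ℤ} (ht : #t = r + 1) (hta : ∀ x ∈ t, a' ≤ x ∧ x ≤ a' + n)
        (ha' : a ≤ a') (ha'b : a' + n ≤ b) : c / r ! ≤ divDiff t g :=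
      ih ht (fun x hx => mem_Icc.2 (hta x hx)) fun z hz hzn => hg z (by omega) (by omega)
    have hsab {x : ℤ} (hx : x ∈ s) : a ≤ x ∧ x ≤ b := mem_Icc.1 (hs hx)
    by_cases ha : a ∈ s
    swap
    · refine ih' (a' := a + 1) hcard (fun x hx => ?_) (by omega) (by omega)
      have := ne_of_mem_of_not_mem hx ha
      have := hsab hx
      omega
    by_cases hb : b ∈ s
    swap
    · refine ih' hcard (fun x hx => ?_) le_rfl (by omega)
      have := ne_of_mem_of_not_mem hx hb
      have := hsab hx
      omega
    by_cases hfull : #(Icc a b) ≤ #s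
    · obtain rfl := eq_of_subset_of_card_le hs hfull
      exact div_factorial_le_divDiff_Icc hcard hg
    obtain ⟨y, hy, hys⟩ := not_subset.1 (mt card_le_card hfull)
    have hay : a < y := lt_of_le_of_ne (mem_Icc.1 hy).1 (ne_of_mem_of_not_mem ha hys)
    have hyb : y < b := lt_of_le_of_ne (mem_Icc.1 hy).2 (ne_of_mem_of_not_mem hb hys).symm
    have hcard' {x : ℤ} (hx : x ∈ s) : #((insert y s).erase x) = r + 1 := by
      rw [card_erase_of_mem (mem_insert_of_mem hx), card_insert_of_notMem hys, hcard]
      rfl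
    have hmem {x z : ℤ} (hz : z ∈ (insert y s).erase x) : z ≠ x ∧ a ≤ z ∧ z ≤ b := by
      obtain ⟨hzx, hz⟩ := mem_erase.1 hz
      rcases mem_insert.1 hz with rfl | hz
      · omega
      · exact ⟨hzx, hsab hz⟩
    refine le_divDiff_of_le_divDiff_erase_insert ha hb hys hay hyb ?_ ?_
    · refine ih' (a' := a + 1) (hcard' ha) (fun z hz => ?_) (by omega) (by omega)
      have := hmem hz
      omega
    · refine ih' (hcard' hb) (fun z hz => ?_) le_rfl (by omega)
      have := hmem hz
      omega

theorem abs_divDiff_le {r : ℕ} {g : ℤ → 𝕜} {K : 𝕜} (n : ℕ) {a : ℤ} {s : Finset ℤ}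
    (hcard : #s = r + 1) (hs : s ⊆ Icc a (a + n))
    (hg : ∀ z, a ≤ z → z + r ≤ a + n → |Δ_[1] ^[r] g z| ≤ K) : |divDiff s g| ≤ K / r ! := by
  have hneg : Δ_[1] ^[r] (-g) = -Δ_[1] ^[r] g := by
    simpa using fwdDiff_iter_const_smul 1 (-1 : 𝕜) g r
  have hupper := div_factorial_le_divDiff (g := -g) (c := -K) n hcard hs fun z hz hzn => by
    simpa [hneg] using (abs_le.1 (hg z hz hzn)).2
  rw [divDiff_neg, neg_div, neg_le_neg_iff] at hupper
  rw [abs_le, ← neg_div]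
  exact ⟨div_factorial_le_divDiff n hcard hs fun z hz hzn => (abs_le.1 (hg z hz hzn)).1, hupper⟩

end LinearOrderedField

theorem divided_difference_mean_value_general (r : ℕ) (x : Fin (r + 1) → ℤ)
    (hx : StrictMono x) (f : ℤ → ℝ) :
    |∑ i, f (x i) / ∏ j ∈ Finset.univ.erase i, ((x i : ℝ) - (x j : ℝ))| ≤
      (1 / (r.factorial : ℝ)) *
        sSup {v : ℝ | ∃ z : ℤ, x 0 ≤ z ∧ z ≤ x (Fin.last r) ∧
          v = |∑ k ∈ Finset.range (r + 1), (-1 : ℝ) ^ k * (r.choose k : ℝ) * f (z - k)|} := by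
  classical
  have hbdd : BddAbove {v : ℝ | ∃ z : ℤ, x 0 ≤ z ∧ z ≤ x (Fin.last r) ∧
      v = |∑ k ∈ range (r + 1), (-1 : ℝ) ^ k * (r.choose k : ℝ) * f (z - k)|} := by
    refine ((Set.finite_Icc (x 0) (x (Fin.last r))).image fun z =>
      |∑ k ∈ range (r + 1), (-1 : ℝ) ^ k * (r.choose k : ℝ) * f (z - k)|).bddAbove.mono ?_
    rintro v ⟨z, hz₀, hzr, rfl⟩
    exact ⟨z, ⟨hz₀, hzr⟩, rfl⟩
  have hcard : #(univ.image x) = r + 1 := by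
    rw [card_image_of_injective _ hx.injective, Finset.card_univ, Fintype.card_fin]
  have hs : univ.image x ⊆ Icc (x 0) (x 0 + (x (Fin.last r) - x 0).toNat) := by
    simp only [subset_iff, mem_image, mem_univ, true_and, mem_Icc, forall_exists_index,
      forall_apply_eq_imp_iff]
    intro i
    have := hx.monotone (Fin.zero_le i)
    have := hx.monotone (Fin.le_last i)
    omega
  have hx₀ : x 0 ≤ x (Fin.last r) := hx.monotone (Fin.zero_le _)
  rw [← divDiff_image hx.injective, one_div_mul_eq_div]
  refine abs_divDiff_le _ hcard hs fun z hz hzr =>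
    le_csSup hbdd ⟨z + r, hz.trans (by omega), ?_, ?_⟩
  · omega
  · rw [fwdDiff_iter_eq_sum_sub]

/-- mean value theorem for divided differences over integers:
`|f[x₀,…,x_r]| ≤ (1/r!)·max{|Δ^r f(x)| : x₀ ≤ x ≤ x_r}`, where
`Δ^r f(x) = Σ_{k=0}^r (−1)^k C(r,k) f(x−k)` is the `r`-th backward difference. -/
theorem divided_difference_mean_value (r : ℕ) (hr : 1 ≤ r) (x : Fin (r + 1) → ℤ)
    (hx : StrictMono x) (f : ℤ → ℝ) :
    |∑ i, f (x i) / ∏ j ∈ Finset.univ.erase i, ((x i : ℝ) - (x j : ℝ))| ≤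
      (1 / (r.factorial : ℝ)) *
        sSup {v : ℝ | ∃ z : ℤ, x 0 ≤ z ∧ z ≤ x (Fin.last r) ∧
          v = |∑ k ∈ Finset.range (r + 1), (-1 : ℝ) ^ k * (r.choose k : ℝ) * f (z - k)|} :=
  divided_difference_mean_value_general r x hx f
end
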